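/- arXiv:2203.00338 — 12 statements merged into one kernel-verified Lean document; each statement's English description precedes it below -/
import Mathlib

section
/- Let X be a real Banach space and A ⊆ X a bounded subset. Define ε₁ as the infimum of the ε > 0 for which there exists N₁ ∈ ℕ such that for every x* in the closed unit ball B_{X*} of the dual X*, the set {x ∈ A : |x*(x)| > ε} has at most N₁ elements. Define ε₂ as the infimum of the ε > 0 for which there exists N₂ ∈ ℕ such that every finite subset B ⊆ A with |B| ≥ N₂ satisfies ‖ |B|⁻¹ · Σ_{x∈B} x ‖ < ε. Then ε₁ = ε₂. -/
/-!
Testing the average of a finite `B ⊆ A` against a norming functional `g` (Hahn–Banach) gives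
`|B| ‖avg B‖ = ∑_{x ∈ B} g x ≤ N₁ sup_A ‖x‖ + |B| ε`, since at most `N₁` points of `B` have
`|g x| > ε`; hence an `ε` admissible for `ε₁` makes every `ε + δ` admissible for `ε₂`.
Conversely, if more than `2 N₂` points of `A` had `|f x| > ε`, then more than `N₂` of them would
have `± f x > ε` with a common sign, and their average `v` would satisfy `ε < ± f v ≤ ‖v‖`.
-/

theorem Set.encard_le_coe_of_forall_finset_card_le {α : Type*} {s : Set α} {n : ℕ}
    (h : ∀ t : Finset α, ↑t ⊆ s → t.card ≤ n) : s.encard ≤ n := by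
  rcases s.finite_or_infinite with hs | hs
  · rw [hs.encard_eq_coe_toFinset_card]
    exact_mod_cast h _ (by simp)
  · obtain ⟨t, hts, htcard⟩ := hs.exists_subset_card_eq (n + 1)
    have := h t hts
    omega

section Thresholds

variable {X : Type*} [SeminormedAddCommGroup X] [NormedSpace ℝ X]

/-- `ε₁` and `ε₂` of the statement are the infima of the thresholds of these two kinds. -/
def IsDualCountThreshold (A : Set X) (ε : ℝ) : Prop :=
  0 < ε ∧ ∃ N₁ : ℕ, ∀ f : X →L[ℝ] ℝ, ‖f‖ ≤ 1 → {x ∈ A | ε < |f x|}.encard ≤ (N₁ : ℕ∞)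

def IsAverageThreshold (A : Set X) (ε : ℝ) : Prop :=
  0 < ε ∧ ∃ N₂ : ℕ, ∀ B : Finset X, ↑B ⊆ A → N₂ ≤ B.card → ‖(B.card : ℝ)⁻¹ • ∑ x ∈ B, x‖ < ε

theorem ContinuousLinearMap.abs_apply_le_of_opNorm_le_one {g : X →L[ℝ] ℝ} (hg : ‖g‖ ≤ 1)
    (x : X) : |g x| ≤ ‖x‖ := by
  simpa using g.le_of_opNorm_le hg x

theorem lt_norm_average_of_forall_lt_apply {g : X →L[ℝ] ℝ} (hg : ‖g‖ ≤ 1) {B : Finset X}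
    (hB : B.Nonempty) {ε : ℝ} (hε : ∀ x ∈ B, ε < g x) :
    ε < ‖(B.card : ℝ)⁻¹ • ∑ x ∈ B, x‖ := by
  have hcard : (0 : ℝ) < B.card := by exact_mod_cast hB.card_pos
  have hsum : B.card * ε < ∑ x ∈ B, g x := by
    simpa using Finset.sum_lt_sum_of_nonempty hB hε
  calc ε < (B.card : ℝ)⁻¹ * ∑ x ∈ B, g x := by rwa [lt_inv_mul_iff₀ hcard]
    _ = g ((B.card : ℝ)⁻¹ • ∑ x ∈ B, x) := by simp
    _ ≤ ‖(B.card : ℝ)⁻¹ • ∑ x ∈ B, x‖ :=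
        (le_abs_self _).trans (g.abs_apply_le_of_opNorm_le_one hg _)

theorem norm_sum_le_of_card_filter_le {B : Finset X} {C ε : ℝ} {N : ℕ}
    (hC : ∀ x ∈ B, ‖x‖ ≤ C) (hC₀ : 0 ≤ C) (hε : 0 ≤ ε)
    (hN : ∀ g : X →L[ℝ] ℝ, ‖g‖ ≤ 1 → (B.filter fun x => ε < |g x|).card ≤ N) :
    ‖∑ x ∈ B, x‖ ≤ N * C + B.card * ε := by
  obtain ⟨g, hg, hgs⟩ := exists_dual_vector'' ℝ (∑ x ∈ B, x)
  have hlarge : ∑ x ∈ B.filter (fun x => ε < |g x|), |g x| ≤ N * C :=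
    calc _ ≤ (B.filter fun x => ε < |g x|).card • C :=
          Finset.sum_le_card_nsmul _ _ _ fun x hx =>
            (g.abs_apply_le_of_opNorm_le_one hg x).trans (hC x (Finset.mem_filter.1 hx).1)
      _ ≤ N * C := by
          rw [nsmul_eq_mul]; gcongr; exact_mod_cast hN g hg
  have hsmall : ∑ x ∈ B.filter (fun x => ¬ ε < |g x|), |g x| ≤ B.card * ε :=
    calc _ ≤ (B.filter fun x => ¬ ε < |g x|).card • ε :=
          Finset.sum_le_card_nsmul _ _ _ fun x hx => not_lt.1 (Finset.mem_filter.1 hx).2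
      _ ≤ B.card * ε := by
          rw [nsmul_eq_mul]
          exact mul_le_mul_of_nonneg_right (by exact_mod_cast Finset.card_filter_le _ _) hε
  calc ‖∑ x ∈ B, x‖ = ∑ x ∈ B, g x := by rw [← map_sum, hgs]; rfl
    _ ≤ ∑ x ∈ B, |g x| := Finset.sum_le_sum fun x _ => le_abs_self _
    _ = ∑ x ∈ B.filter (fun x => ε < |g x|), |g x|
          + ∑ x ∈ B.filter (fun x => ¬ ε < |g x|), |g x| :=
        (Finset.sum_filter_add_sum_filter_not B _ _).symm
    _ ≤ N * C + B.card * ε := add_le_add hlarge hsmall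

variable {A : Set X} {ε : ℝ}

theorem isDualCountThreshold_of_forall_norm_le {C : ℝ} (hC : ∀ x ∈ A, ‖x‖ ≤ C) (hε : 0 < ε)
    (hCε : C ≤ ε) : IsDualCountThreshold A ε := by
  refine ⟨hε, 0, fun f hf => ?_⟩
  have hempty : {x ∈ A | ε < |f x|} = ∅ :=
    Set.eq_empty_of_forall_notMem fun x ⟨hxA, hx⟩ =>
      ((f.abs_apply_le_of_opNorm_le_one hf x).trans ((hC x hxA).trans hCε)).not_gt hx
  simp [hempty]

theorem encard_lt_apply_le_of_forall_norm_average_lt {N : ℕ}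
    (hN : ∀ B : Finset X, ↑B ⊆ A → N ≤ B.card → ‖(B.card : ℝ)⁻¹ • ∑ x ∈ B, x‖ < ε)
    {g : X →L[ℝ] ℝ} (hg : ‖g‖ ≤ 1) : {x ∈ A | ε < g x}.encard ≤ N := by
  refine Set.encard_le_coe_of_forall_finset_card_le fun B hB => ?_
  rcases B.eq_empty_or_nonempty with rfl | hne
  · simp
  by_contra! hcard
  exact (hN B (fun x hx => (hB hx).1) hcard.le).not_gt
    (lt_norm_average_of_forall_lt_apply hg hne fun x hx => (hB hx).2)

theorem IsAverageThreshold.isDualCountThreshold (h : IsAverageThreshold A ε) :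
    IsDualCountThreshold A ε := by
  obtain ⟨hε, N, hN⟩ := h
  refine ⟨hε, N + N, fun f hf => ?_⟩
  have hsplit : {x ∈ A | ε < |f x|} ⊆ {x ∈ A | ε < f x} ∪ {x ∈ A | ε < (-f) x} :=
    fun x ⟨hxA, hx⟩ => (lt_abs.1 hx).imp (fun h => ⟨hxA, h⟩) fun h => ⟨hxA, h⟩
  calc {x ∈ A | ε < |f x|}.encard
      ≤ {x ∈ A | ε < f x}.encard + {x ∈ A | ε < (-f) x}.encard :=
        (Set.encard_le_encard hsplit).trans (Set.encard_union_le _ _)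
    _ ≤ N + N := add_le_add (encard_lt_apply_le_of_forall_norm_average_lt hN hf)
        (encard_lt_apply_le_of_forall_norm_average_lt hN (by rwa [norm_neg]))
    _ = ((N + N : ℕ) : ℕ∞) := by push_cast; rfl

theorem IsDualCountThreshold.isAverageThreshold_add {C : ℝ} (hC : ∀ x ∈ A, ‖x‖ ≤ C)
    (hC₀ : 0 ≤ C) (h : IsDualCountThreshold A ε) {δ : ℝ} (hδ : 0 < δ) :
    IsAverageThreshold A (ε + δ) := by
  obtain ⟨hε, N, hN⟩ := h
  refine ⟨by linarith, ⌈N * C / δ⌉₊ + 1, fun B hBA hBcard => ?_⟩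
  have hcard : (0 : ℝ) < B.card := by exact_mod_cast (by omega : 0 < B.card)
  have hNC : N * C < B.card * δ := by
    have : (⌈N * C / δ⌉₊ : ℝ) + 1 ≤ B.card := by exact_mod_cast hBcard
    rw [← div_lt_iff₀ hδ]
    linarith [Nat.le_ceil (N * C / δ)]
  have hfilter : ∀ g : X →L[ℝ] ℝ, ‖g‖ ≤ 1 → (B.filter fun x => ε < |g x|).card ≤ N := by
    intro g hg
    have hsub : ↑(B.filter fun x => ε < |g x|) ⊆ {x ∈ A | ε < |g x|} := fun x hx =>
      ⟨hBA (Finset.mem_filter.1 hx).1, (Finset.mem_filter.1 hx).2⟩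
    have := (Set.encard_le_encard hsub).trans (hN g hg)
    rwa [Set.encard_coe_eq_coe_finsetCard, Nat.cast_le] at this
  have hsum := norm_sum_le_of_card_filter_le (fun x hx => hC x (hBA hx)) hC₀ hε.le hfilter
  rw [norm_smul, norm_inv, Real.norm_natCast, inv_mul_lt_iff₀ hcard]
  nlinarith

end Thresholds

theorem statement0_general {X : Type*} [NormedAddCommGroup X] [NormedSpace ℝ X]
    (A : Set X) (hA : Bornology.IsBounded A) :
    sInf {ε : ℝ | 0 < ε ∧ ∃ N₁ : ℕ, ∀ f : X →L[ℝ] ℝ, ‖f‖ ≤ 1 →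
        {x ∈ A | ε < |f x|}.encard ≤ (N₁ : ℕ∞)} =
      sInf {ε : ℝ | 0 < ε ∧ ∃ N₂ : ℕ, ∀ B : Finset X, ↑B ⊆ A → N₂ ≤ B.card →
        ‖(B.card : ℝ)⁻¹ • ∑ x ∈ B, x‖ < ε} := by
  change sInf {ε | IsDualCountThreshold A ε} = sInf {ε | IsAverageThreshold A ε}
  obtain ⟨C, hC₀, hC⟩ := hA.exists_pos_norm_le
  have hdual : IsDualCountThreshold A C := isDualCountThreshold_of_forall_norm_le hC hC₀ le_rfl
  apply le_antisymm
  · exact csInf_le_csInf ⟨0, fun _ h => h.1.le⟩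
      ⟨C + 1, hdual.isAverageThreshold_add hC hC₀.le one_pos⟩
      fun _ => IsAverageThreshold.isDualCountThreshold
  · refine le_csInf ⟨C, hdual⟩ fun ε hε => le_of_forall_pos_le_add fun δ hδ => ?_
    exact csInf_le ⟨0, fun _ h => h.1.le⟩ (hε.isAverageThreshold_add hC hC₀.le hδ)

/-- For a bounded subset `A` of a real Banach space `X`, the infimum `ε₁` of the
`ε > 0` for which some `N₁ ∈ ℕ` bounds the cardinality of `{x ∈ A : |x*(x)| > ε}` for all `x*`
in the closed unit ball of the dual, equals the infimum `ε₂` of the `ε > 0` for which some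
`N₂ ∈ ℕ` makes `‖|B|⁻¹ • ∑_{x ∈ B} x‖ < ε` for every finite `B ⊆ A` with `|B| ≥ N₂`. -/
theorem statement0 {X : Type*} [NormedAddCommGroup X] [NormedSpace ℝ X] [CompleteSpace X]
    (A : Set X) (hA : Bornology.IsBounded A) :
    sInf {ε : ℝ | 0 < ε ∧ ∃ N₁ : ℕ, ∀ f : X →L[ℝ] ℝ, ‖f‖ ≤ 1 →
        {x ∈ A | ε < |f x|}.encard ≤ (N₁ : ℕ∞)} =
      sInf {ε : ℝ | 0 < ε ∧ ∃ N₂ : ℕ, ∀ B : Finset X, ↑B ⊆ A → N₂ ≤ B.card →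
        ‖(B.card : ℝ)⁻¹ • ∑ x ∈ B, x‖ < ε} :=
  statement0_general A hA
end

section
/- Let X be a real Banach space, A ⊆ X a bounded subset and ε > 0. Suppose there exists N ∈ ℕ such that for every x* in the closed unit ball B_{X*} of X*, the set {x ∈ A : |x*(x)| > ε} has at most N elements. Then γ(A) ≤ ε, i.e., the weak*-closure of J(A) in the bidual X** is contained in J(X) + ε'·B_{X**} for every ε' > ε, where J : X → X** is the canonical embedding. -/
open NormedSpace Pointwise Topology Filter

/-
A point `F` of the weak*-closure of `J(A)` either lies in `J(A)` or is an accumulation point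
of it. In the latter case, as the weak* topology is Hausdorff, every weak*-neighbourhood
`{G | ε < ‖G f‖}` of `F` meets `J(A)` in infinitely many points. For `‖f‖ ≤ 1` only the finitely
many `x ∈ A` with `ε < |f x|` can contribute, so `|F f| ≤ ε`; hence `‖F‖ ≤ ε` and `F = J 0 + F`.
-/

theorem accPt_of_mem_closure_of_notMem {Y : Type*} [TopologicalSpace Y] {y : Y} {s : Set Y}
    (hy : y ∈ closure s) (hys : y ∉ s) : AccPt y (𝓟 s) :=
  accPt_iff_nhds.2 fun U hU =>
    let ⟨z, hz⟩ := mem_closure_iff_nhds.1 hy U hU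
    ⟨z, hz, ne_of_mem_of_not_mem hz.2 hys⟩

theorem norm_apply_le_of_mem_weakStarClosure_of_notMem {𝕜 X : Type*}
    [NontriviallyNormedField 𝕜] [NormedAddCommGroup X] [NormedSpace 𝕜 X] {A : Set X}
    {F : StrongDual 𝕜 (StrongDual 𝕜 X)}
    (hF : StrongDual.toWeakDual F ∈
      closure (StrongDual.toWeakDual '' (inclusionInDoubleDual 𝕜 X '' A)))
    (hFA : F ∉ inclusionInDoubleDual 𝕜 X '' A) {f : StrongDual 𝕜 X} {ε : ℝ}
    (hfin : {x ∈ A | ε < ‖f x‖}.Finite) : ‖F f‖ ≤ ε := by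
  by_contra! hlt
  set U : Set (WeakDual 𝕜 (StrongDual 𝕜 X)) := {G | ε < ‖G f‖}
  have hU : U ∈ 𝓝 (StrongDual.toWeakDual F) :=
    (isOpen_lt continuous_const (WeakDual.eval_continuous f).norm).mem_nhds hlt
  have hacc := (accPt_of_mem_closure_of_notMem hF
    (StrongDual.toWeakDual.injective.mem_set_image.not.2 hFA)).nhds_inter hU
  refine Set.Infinite.of_accPt hacc
    ((hfin.image (inclusionInDoubleDual 𝕜 X)).image StrongDual.toWeakDual |>.subset ?_)
  rintro _ ⟨hGU, _, ⟨x, hx, rfl⟩, rfl⟩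
  exact ⟨_, ⟨x, ⟨hx, hGU⟩, rfl⟩, rfl⟩

theorem statement1_general {X : Type*} [NormedAddCommGroup X] [NormedSpace ℝ X]
    (A : Set X) (ε : ℝ) (hε : 0 < ε) (N : ℕ)
    (h : ∀ f : X →L[ℝ] ℝ, ‖f‖ ≤ 1 → {x ∈ A | ε < |f x|}.encard ≤ (N : ℕ∞)) :
    ∀ ε' > ε,
      StrongDual.toWeakDual ⁻¹'
          closure (StrongDual.toWeakDual ''
            (inclusionInDoubleDual ℝ X '' A)) ⊆
        Set.range (inclusionInDoubleDual ℝ X) +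
          Metric.closedBall (0 : StrongDual ℝ (StrongDual ℝ X)) ε' := by
  intro ε' hε' F hF
  by_cases hFA : F ∈ inclusionInDoubleDual ℝ X '' A
  · obtain ⟨a, -, rfl⟩ := hFA
    exact ⟨_, ⟨a, rfl⟩, 0, Metric.mem_closedBall_self (hε.trans hε').le, add_zero _⟩
  have hF_norm : ‖F‖ ≤ ε :=
    F.opNorm_le_of_unit_norm hε.le fun f hf =>
      norm_apply_le_of_mem_weakStarClosure_of_notMem hF hFA
        (Set.finite_of_encard_le_coe (h f hf.le))
  exact ⟨0, ⟨0, map_zero _⟩, F,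
    Metric.mem_closedBall.2 ((dist_zero_right F).trans_le (hF_norm.trans hε'.le)), zero_add F⟩

/-- If `A` is a bounded subset of a real Banach space `X` and for some `ε > 0` there
is `N ∈ ℕ` such that `{x ∈ A : |x*(x)| > ε}` has at most `N` elements for every `x*` in the
closed unit ball of `X*`, then `γ(A) ≤ ε`: for every `ε' > ε`, the weak*-closure of `J(A)` in the
bidual is contained in `J(X) + ε'·B_{X**}`, where `J` is the canonical embedding. -/
theorem statement1 {X : Type*} [NormedAddCommGroup X] [NormedSpace ℝ X] [CompleteSpace X]
    (A : Set X) (hA : Bornology.IsBounded A) (ε : ℝ) (hε : 0 < ε) (N : ℕ)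
    (h : ∀ f : X →L[ℝ] ℝ, ‖f‖ ≤ 1 → {x ∈ A | ε < |f x|}.encard ≤ (N : ℕ∞)) :
    ∀ ε' > ε,
      StrongDual.toWeakDual ⁻¹'
          closure (StrongDual.toWeakDual ''
            (inclusionInDoubleDual ℝ X '' A)) ⊆
        Set.range (inclusionInDoubleDual ℝ X) +
          Metric.closedBall (0 : StrongDual ℝ (StrongDual ℝ X)) ε' :=
  statement1_general A ε hε N h
end

section
/- Let X be a real Banach space and A ⊆ X a bounded subset. Then A is uniformly weakly null if and only if A is uniformly Banach–Saks null, i.e., for every ε > 0 there exists N ∈ ℕ such that every finite subset B ⊆ A with |B| ≥ N satisfies ‖ |B|⁻¹ · Σ_{x∈B} x ‖ < ε. -/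
/-- A subset `A` of a real Banach space is uniformly weakly null if for every `ε > 0` there is
`N ∈ ℕ` such that `{x ∈ A : |x*(x)| > ε}` has at most `N` elements for every `x*` in the closed
unit ball of the dual. -/
def UniformlyWeaklyNull {X : Type*} [NormedAddCommGroup X] [NormedSpace ℝ X] (A : Set X) : Prop :=
  ∀ ε : ℝ, 0 < ε → ∃ N : ℕ, ∀ f : X →L[ℝ] ℝ, ‖f‖ ≤ 1 →
    {x ∈ A | ε < |f x|}.encard ≤ (N : ℕ∞)

theorem Finset.sum_le_card_filter_mul_add_card_mul {α : Type*} (B : Finset α) (φ : α → ℝ)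
    {M δ : ℝ} {N : ℕ} (hM : 0 ≤ M) (hδ : 0 ≤ δ) (hφM : ∀ x ∈ B, φ x ≤ M)
    (hN : (B.filter (δ < φ ·)).card ≤ N) : ∑ x ∈ B, φ x ≤ N * M + B.card * δ := by
  rw [← Finset.sum_filter_add_sum_filter_not B (δ < φ ·)]
  gcongr
  · calc ∑ x ∈ B.filter (δ < φ ·), φ x ≤ (B.filter (δ < φ ·)).card * M := by
          simpa using Finset.sum_le_card_nsmul _ φ M fun x hx => hφM x (Finset.mem_filter.1 hx).1
      _ ≤ N * M := by gcongr
  · calc ∑ x ∈ B.filter (¬δ < φ ·), φ x ≤ (B.filter (¬δ < φ ·)).card * δ := by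
          simpa using Finset.sum_le_card_nsmul _ φ δ fun x hx =>
            not_lt.1 (Finset.mem_filter.1 hx).2
      _ ≤ B.card * δ := by gcongr; exact Finset.filter_subset _ _

section

variable {X : Type*} [NormedAddCommGroup X] [NormedSpace ℝ X]

def UniformlyBanachSaksNull (A : Set X) : Prop :=
  ∀ ε : ℝ, 0 < ε → ∃ N : ℕ, ∀ B : Finset X, ↑B ⊆ A → N ≤ B.card →
    ‖(B.card : ℝ)⁻¹ • ∑ x ∈ B, x‖ < ε

theorem norm_le_of_forall_abs_apply_le {x : X} {c : ℝ}
    (h : ∀ f : X →L[ℝ] ℝ, ‖f‖ ≤ 1 → |f x| ≤ c) : ‖x‖ ≤ c := by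
  obtain ⟨g, hg, hgx⟩ := exists_dual_vector'' ℝ x
  calc ‖x‖ = g x := hgx.symm
    _ ≤ |g x| := le_abs_self _
    _ ≤ c := h g hg

theorem le_norm_inv_card_smul_sum {g : X →L[ℝ] ℝ} (hg : ‖g‖ ≤ 1) {B : Finset X}
    (hB : B.Nonempty) {ε : ℝ} (hgB : ∀ x ∈ B, ε ≤ g x) :
    ε ≤ ‖(B.card : ℝ)⁻¹ • ∑ x ∈ B, x‖ := by
  have hcard : (0 : ℝ) < B.card := by exact_mod_cast hB.card_pos
  have hsum : B.card * ε ≤ g (∑ x ∈ B, x) := by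
    simpa [map_sum] using Finset.card_nsmul_le_sum B (fun x => g x) ε hgB
  calc ε ≤ g ((B.card : ℝ)⁻¹ • ∑ x ∈ B, x) := by
        rw [map_smul, smul_eq_mul, le_inv_mul_iff₀ hcard]; exact hsum
    _ ≤ ‖g ((B.card : ℝ)⁻¹ • ∑ x ∈ B, x)‖ := le_abs_self _
    _ ≤ ‖(B.card : ℝ)⁻¹ • ∑ x ∈ B, x‖ := g.le_of_opNorm_le hg _ |>.trans_eq (one_mul _)

theorem abs_apply_inv_card_smul_sum_le {A : Set X} {M δ : ℝ} {N : ℕ} (hM : 0 ≤ M) (hδ : 0 ≤ δ)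
    (hAM : ∀ x ∈ A, ‖x‖ ≤ M) {f : X →L[ℝ] ℝ} (hf : ‖f‖ ≤ 1)
    (hN : {x ∈ A | δ < |f x|}.encard ≤ N) {B : Finset X} (hBA : ↑B ⊆ A) :
    |f ((B.card : ℝ)⁻¹ • ∑ x ∈ B, x)| ≤ N * M / B.card + δ := by
  have hfilter : (B.filter (δ < |f ·|)).card ≤ N := by
    have hsub : ↑(B.filter (δ < |f ·|)) ⊆ {x ∈ A | δ < |f x|} := fun x hx => by
      rw [Finset.coe_filter] at hx
      exact ⟨hBA hx.1, hx.2⟩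
    exact_mod_cast (Set.encard_coe_eq_coe_finsetCard _).symm.trans_le
      ((Set.encard_mono hsub).trans hN)
  have hsum : ∑ x ∈ B, |f x| ≤ N * M + B.card * δ :=
    Finset.sum_le_card_filter_mul_add_card_mul B _ hM hδ
      (fun x hx => (f.le_of_opNorm_le hf x).trans (by simpa using hAM x (hBA hx))) hfilter
  have hcard : (B.card : ℝ)⁻¹ * B.card ≤ 1 := by
    rcases eq_or_ne (B.card : ℝ) 0 with h | h <;> simp [h]
  calc |f ((B.card : ℝ)⁻¹ • ∑ x ∈ B, x)| = (B.card : ℝ)⁻¹ * |∑ x ∈ B, f x| := by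
        rw [map_smul, map_sum, smul_eq_mul, abs_mul, abs_inv, Nat.abs_cast]
    _ ≤ (B.card : ℝ)⁻¹ * (N * M + B.card * δ) := by
        gcongr; exact (Finset.abs_sum_le_sum_abs _ _).trans hsum
    _ = N * M / B.card + (B.card : ℝ)⁻¹ * B.card * δ := by ring
    _ ≤ N * M / B.card + δ := by gcongr; exact mul_le_of_le_one_left hδ hcard

theorem UniformlyWeaklyNull.uniformlyBanachSaksNull {A : Set X} (h : UniformlyWeaklyNull A)
    (hA : Bornology.IsBounded A) : UniformlyBanachSaksNull A := by
  intro ε hε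
  obtain ⟨M, hM, hAM⟩ := hA.exists_pos_norm_le
  obtain ⟨N, hN⟩ := h (ε / 2) (by positivity)
  refine ⟨⌈2 * N * M / ε⌉₊ + 1, fun B hBA hB => ?_⟩
  have hcard : 2 * N * M / ε < B.card :=
    (Nat.le_ceil _).trans_lt (by exact_mod_cast Nat.lt_of_lt_of_le (Nat.lt_succ_self _) hB)
  have hsmall : N * M / B.card < ε / 2 := by
    rw [div_lt_iff₀ ((by positivity : (0 : ℝ) ≤ 2 * N * M / ε).trans_lt hcard)]
    rw [div_lt_iff₀ hε] at hcard
    linarith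
  calc ‖(B.card : ℝ)⁻¹ • ∑ x ∈ B, x‖ ≤ N * M / B.card + ε / 2 :=
        norm_le_of_forall_abs_apply_le fun f hf =>
          abs_apply_inv_card_smul_sum_le hM.le (by positivity) hAM hf (hN f hf) hBA
    _ < ε := by linarith

theorem encard_setOf_lt_apply_le {A : Set X} {ε : ℝ} {N : ℕ}
    (hA : ∀ B : Finset X, ↑B ⊆ A → N ≤ B.card → ‖(B.card : ℝ)⁻¹ • ∑ x ∈ B, x‖ < ε)
    {g : X →L[ℝ] ℝ} (hg : ‖g‖ ≤ 1) : {x ∈ A | ε < g x}.encard ≤ N := by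
  refine Set.encard_le_coe_of_forall_finset_card_le fun B hB => ?_
  by_contra! hlt
  have hsmall := hA B (fun x hx => (hB hx).1) hlt.le
  have hlarge := le_norm_inv_card_smul_sum hg (Finset.card_pos.1 (by omega))
    (fun x hx => (hB hx).2.le)
  linarith

theorem UniformlyBanachSaksNull.uniformlyWeaklyNull {A : Set X} (h : UniformlyBanachSaksNull A) :
    UniformlyWeaklyNull A := by
  intro ε hε
  obtain ⟨N, hN⟩ := h ε hε
  refine ⟨N + N, fun f hf => ?_⟩
  have hsplit : {x ∈ A | ε < |f x|} = {x ∈ A | ε < f x} ∪ {x ∈ A | ε < (-f) x} := by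
    ext x
    simp only [lt_abs, Set.mem_ofPred_eq, Set.mem_union, neg_apply, and_or_left]
  rw [hsplit, Nat.cast_add]
  exact (Set.encard_union_le _ _).trans (add_le_add (encard_setOf_lt_apply_le hN hf)
    (encard_setOf_lt_apply_le hN (by rwa [norm_neg])))

end

theorem statement2_general {X : Type*} [NormedAddCommGroup X] [NormedSpace ℝ X]
    (A : Set X) (hA : Bornology.IsBounded A) :
    UniformlyWeaklyNull A ↔
      ∀ ε : ℝ, 0 < ε → ∃ N : ℕ, ∀ B : Finset X, ↑B ⊆ A → N ≤ B.card →
        ‖(B.card : ℝ)⁻¹ • ∑ x ∈ B, x‖ < ε :=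
  ⟨fun h => h.uniformlyBanachSaksNull hA, UniformlyBanachSaksNull.uniformlyWeaklyNull⟩

/-- A bounded subset `A` of a real Banach space `X` is uniformly weakly null if and
only if it is uniformly Banach–Saks null: for every `ε > 0` there is `N ∈ ℕ` such that every
finite `B ⊆ A` with `|B| ≥ N` satisfies `‖|B|⁻¹ • ∑_{x ∈ B} x‖ < ε`. -/
theorem statement2 {X : Type*} [NormedAddCommGroup X] [NormedSpace ℝ X] [CompleteSpace X]
    (A : Set X) (hA : Bornology.IsBounded A) :
    UniformlyWeaklyNull A ↔
      ∀ ε : ℝ, 0 < ε → ∃ N : ℕ, ∀ B : Finset X, ↑B ⊆ A → N ≤ B.card →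
        ‖(B.card : ℝ)⁻¹ • ∑ x ∈ B, x‖ < ε :=
  statement2_general A hA
end

section
/- Let X be a real Banach space and A ⊆ X a bounded uniformly weakly null subset. Then A ∪ {0} is compact in the weak topology of X. -/
open Filter Topology

theorem tendsto_toWeakSpace_iff {𝕜 E α : Type*} [CommSemiring 𝕜] [TopologicalSpace 𝕜]
    [ContinuousAdd 𝕜] [ContinuousConstSMul 𝕜 𝕜] [AddCommMonoid E] [Module 𝕜 E]
    [TopologicalSpace E] {l : Filter α} {g : α → E} {x : E} :
    Tendsto (fun i => toWeakSpace 𝕜 E (g i)) l (𝓝 (toWeakSpace 𝕜 E x)) ↔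
      ∀ f : E →L[𝕜] 𝕜, Tendsto (fun i => f (g i)) l (𝓝 (f x)) := by
  have hind : IsInducing (fun (y : WeakSpace 𝕜 E) (f : E →L[𝕜] 𝕜) => f y) := ⟨rfl⟩
  rw [hind.tendsto_nhds_iff, tendsto_pi_nhds]
  rfl

namespace UniformlyWeaklyNull

variable {X : Type*} [NormedAddCommGroup X] [NormedSpace ℝ X] {A : Set X}

theorem finite_lt_abs_apply (h : UniformlyWeaklyNull A) (f : X →L[ℝ] ℝ) {ε : ℝ} (hε : 0 < ε) :
    {x ∈ A | ε < |f x|}.Finite := by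
  set c : ℝ := ‖f‖ + 1
  have hc : 0 < c := by positivity
  obtain ⟨N, hN⟩ := h (ε / c) (div_pos hε hc)
  have hnorm : ‖c⁻¹ • f‖ ≤ 1 := by
    rw [norm_smul, norm_inv, Real.norm_of_nonneg hc.le, inv_mul_le_iff₀ hc]
    linarith
  have hscale : {x ∈ A | ε < |f x|} = {x ∈ A | ε / c < |(c⁻¹ • f) x|} := by
    ext x
    simp only [Set.mem_ofPred_eq, smul_apply, smul_eq_mul, abs_mul, abs_inv, abs_of_pos hc,
      div_lt_iff₀ hc, mul_right_comm, inv_mul_cancel₀ hc.ne', one_mul]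
  rw [hscale]
  exact Set.finite_of_encard_le_coe (hN _ hnorm)

theorem tendsto_cofinite (h : UniformlyWeaklyNull A) (f : X →L[ℝ] ℝ) :
    Tendsto (fun x : A => f x) cofinite (𝓝 0) := by
  refine Metric.nhds_basis_closedBall.tendsto_right_iff.mpr fun ε hε => ?_
  refine Filter.eventually_cofinite.mpr
    (((h.finite_lt_abs_apply f hε).preimage Subtype.val_injective.injOn).subset fun x hx => ?_)
  simpa [Real.dist_eq] using hx

theorem tendsto_toWeakSpace_cofinite (h : UniformlyWeaklyNull A) :
    Tendsto (fun x : A => toWeakSpace ℝ X x) cofinite (𝓝 0) := by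
  rw [← map_zero (toWeakSpace ℝ X), tendsto_toWeakSpace_iff]
  intro f
  simpa using h.tendsto_cofinite f

end UniformlyWeaklyNull

theorem statement3_general {X : Type*} [NormedAddCommGroup X] [NormedSpace ℝ X]
    (A : Set X) (h : UniformlyWeaklyNull A) :
    IsCompact (toWeakSpace ℝ X '' (A ∪ {0})) := by
  convert h.tendsto_toWeakSpace_cofinite.isCompact_insert_range_of_cofinite using 1
  rw [Set.union_comm, Set.image_union, Set.image_singleton, map_zero, Set.insert_eq,
    Set.image_eq_range]

/-- If `A` is a bounded uniformly weakly null subset of a real Banach space `X`,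
then `A ∪ {0}` is compact in the weak topology of `X`. -/
theorem statement3 {X : Type*} [NormedAddCommGroup X] [NormedSpace ℝ X] [CompleteSpace X]
    (A : Set X) (hA : Bornology.IsBounded A) (h : UniformlyWeaklyNull A) :
    IsCompact (toWeakSpace ℝ X '' (A ∪ {0})) :=
  statement3_general A h
end

section
/- Let X be a real Banach space and let (xₙ) be a sequence in X that converges uniformly weakly to some x ∈ X. Then (xₙ) is Cesàro convergent to x, i.e., the arithmetic means n⁻¹ · Σ_{k=1}^{n} x_k converge in norm to x. -/
open Filter Topology

/-- A sequence `(xₙ)` in a real Banach space converges uniformly weakly to `x` if for every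
`ε > 0` there is `N ∈ ℕ` such that `{n : |x*(xₙ - x)| > ε}` has at most `N` elements for every
`x*` in the closed unit ball of the dual. -/
def UnifWeaklyConvergent {X : Type*} [NormedAddCommGroup X] [NormedSpace ℝ X]
    (x : ℕ → X) (l : X) : Prop :=
  ∀ ε : ℝ, 0 < ε → ∃ N : ℕ, ∀ f : X →L[ℝ] ℝ, ‖f‖ ≤ 1 →
    {n : ℕ | ε < |f (x n - l)|}.encard ≤ (N : ℕ∞)

/-!
Uniform weak convergence implies weak convergence, so by the uniform boundedness principle
(in the bidual) `‖xₙ - x‖ ≤ C`. Given `ε`, let `N` be the uniform bound on the number of bad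
indices. Testing `sₙ = ∑_{k<n} (x_k - x)` against a norming functional `f`, at most `N` terms
`f (x_k - x)` exceed `ε` and each is at most `C`, so `‖sₙ‖ ≤ N C + n ε`. Hence `sₙ = o(n)`.
-/

open Finset Asymptotics

theorem norm_sum_range_le_of_encard_le {E : Type*} [SeminormedAddCommGroup E] {a : ℕ → E}
    {C ε : ℝ} {N : ℕ} (hC : ∀ k, ‖a k‖ ≤ C) (hε : 0 ≤ ε) (hN : {k | ε < ‖a k‖}.encard ≤ N)
    (n : ℕ) : ‖∑ k ∈ range n, a k‖ ≤ N * C + n * ε := by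
  classical
  set bad := (range n).filter fun k => ε < ‖a k‖
  set good := (range n).filter fun k => ¬ε < ‖a k‖
  have hbad : (#bad : ℝ) ≤ N := by
    have : (bad : Set ℕ).encard ≤ N :=
      (Set.encard_mono fun k hk => (mem_filter.1 hk).2).trans hN
    exact_mod_cast (Set.encard_coe_eq_coe_finsetCard bad ▸ this)
  have hgood : #good ≤ n := (card_filter_le _ _).trans (card_range n).le
  have hC0 : 0 ≤ C := (norm_nonneg _).trans (hC 0)
  calc ‖∑ k ∈ range n, a k‖ ≤ ∑ k ∈ range n, ‖a k‖ := norm_sum_le _ _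
    _ = ∑ k ∈ bad, ‖a k‖ + ∑ k ∈ good, ‖a k‖ := (sum_filter_add_sum_filter_not _ _ _).symm
    _ ≤ #bad * C + #good * ε := by
      simp only [← nsmul_eq_mul]
      gcongr
      · exact sum_le_card_nsmul _ _ _ fun k _ => hC k
      · exact sum_le_card_nsmul _ _ _ fun k hk => not_lt.1 (mem_filter.1 hk).2
    _ ≤ N * C + n * ε := by gcongr

theorem norm_sum_range_le_of_forall_dual_encard_le {X : Type*} [NormedAddCommGroup X]
    [NormedSpace ℝ X] {v : ℕ → X} {C ε : ℝ} {N : ℕ} (hC : ∀ k, ‖v k‖ ≤ C) (hε : 0 ≤ ε)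
    (hN : ∀ f : X →L[ℝ] ℝ, ‖f‖ ≤ 1 → {k | ε < |f (v k)|}.encard ≤ N) (n : ℕ) :
    ‖∑ k ∈ range n, v k‖ ≤ N * C + n * ε := by
  obtain ⟨f, hf, hfv⟩ := exists_dual_vector'' ℝ (∑ k ∈ range n, v k)
  have hfC : ∀ k, ‖f (v k)‖ ≤ C := fun k =>
    (f.le_opNorm _).trans ((mul_le_of_le_one_left (norm_nonneg _) hf).trans (hC k))
  calc ‖∑ k ∈ range n, v k‖ = f (∑ k ∈ range n, v k) := hfv.symm
    _ ≤ ‖∑ k ∈ range n, f (v k)‖ := by rw [map_sum]; exact le_abs_self _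
    _ ≤ N * C + n * ε := norm_sum_range_le_of_encard_le hfC hε (hN f hf) n

theorem exists_norm_le_of_forall_dual_bounded {𝕜 E ι : Type*} [RCLike 𝕜] [NormedAddCommGroup E]
    [NormedSpace 𝕜 E] {v : ι → E} (h : ∀ f : StrongDual 𝕜 E, ∃ C, ∀ i, ‖f (v i)‖ ≤ C) :
    ∃ C, ∀ i, ‖v i‖ ≤ C := by
  obtain ⟨C, hC⟩ := banach_steinhaus (g := fun i => NormedSpace.inclusionInDoubleDual 𝕜 E (v i)) h
  exact ⟨C, fun i => (NormedSpace.inclusionInDoubleDualLi 𝕜).norm_map (v i) ▸ hC i⟩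

theorem Asymptotics.isLittleO_natCast_of_forall_norm_le_add {E : Type*} [SeminormedAddCommGroup E]
    {s : ℕ → E} (h : ∀ ε > 0, ∃ M, ∀ n, ‖s n‖ ≤ M + n * ε) :
    s =o[atTop] fun n => (n : ℝ) := by
  refine IsLittleO.of_bound fun c hc => ?_
  obtain ⟨M, hM⟩ := h (c / 2) (half_pos hc)
  filter_upwards [tendsto_natCast_atTop_atTop.eventually_ge_atTop (2 * M / c)] with n hn
  rw [div_le_iff₀ hc] at hn
  rw [Real.norm_natCast]
  linarith [hM n]

theorem tendsto_cesaro_smul_of_isLittleO {E : Type*} [NormedAddCommGroup E] [NormedSpace ℝ E]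
    {u : ℕ → E} {l : E} (h : (fun n => ∑ i ∈ range n, (u i - l)) =o[atTop] fun n => (n : ℝ)) :
    Tendsto (fun n : ℕ => (n⁻¹ : ℝ) • ∑ i ∈ range n, u i) atTop (𝓝 l) := by
  have hmean : Tendsto (fun n : ℕ => (n⁻¹ : ℝ) • ∑ i ∈ range n, (u i - l) + l) atTop (𝓝 l) := by
    simpa using h.tendsto_inv_smul_nhds_zero.add_const l
  refine hmean.congr' ?_
  filter_upwards [eventually_ne_atTop 0] with n hn
  rw [sum_sub_distrib, sum_const, card_range, smul_sub, ← Nat.cast_smul_eq_nsmul ℝ, smul_smul,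
    inv_mul_cancel₀ (Nat.cast_ne_zero.2 hn), one_smul, sub_add_cancel]

namespace UnifWeaklyConvergent

variable {X : Type*} [NormedAddCommGroup X] [NormedSpace ℝ X] {x : ℕ → X} {l : X}

theorem tendsto_apply_sub (h : UnifWeaklyConvergent x l) (f : X →L[ℝ] ℝ) :
    Tendsto (fun n => f (x n - l)) atTop (𝓝 0) := by
  suffices hball : ∀ g : X →L[ℝ] ℝ, ‖g‖ ≤ 1 → Tendsto (fun n => g (x n - l)) atTop (𝓝 0) by
    rcases eq_or_ne f 0 with rfl | hf
    · simp
    have hnf : ‖f‖ ≠ 0 := norm_ne_zero_iff.2 hf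
    simpa [hnf] using (hball _ (norm_smul_inv_norm (𝕜 := ℝ) hf).le).const_mul ‖f‖
  intro g hg
  rw [Metric.tendsto_nhds, ← Nat.cofinite_eq_atTop]
  intro ε hε
  obtain ⟨N, hN⟩ := h (ε / 2) (half_pos hε)
  refine (Set.finite_of_encard_le_coe (hN g hg)).subset fun n hn => ?_
  simp only [Set.mem_compl_iff, Set.mem_ofPred_eq, Real.dist_eq, sub_zero, not_lt] at hn ⊢
  linarith

theorem exists_norm_sub_le (h : UnifWeaklyConvergent x l) : ∃ C, ∀ n, ‖x n - l‖ ≤ C :=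
  exists_norm_le_of_forall_dual_bounded fun f => by
    obtain ⟨C, hC⟩ := (h.tendsto_apply_sub f).norm.bddAbove_range
    exact ⟨C, fun n => hC (Set.mem_range_self n)⟩

end UnifWeaklyConvergent

theorem statement4_general {X : Type*} [NormedAddCommGroup X] [NormedSpace ℝ X]
    (x : ℕ → X) (l : X) (h : UnifWeaklyConvergent x l) :
    Tendsto (fun n : ℕ => (n : ℝ)⁻¹ • ∑ k ∈ Finset.range n, x k) atTop (nhds l) := by
  obtain ⟨C, hC⟩ := h.exists_norm_sub_le
  refine tendsto_cesaro_smul_of_isLittleO (isLittleO_natCast_of_forall_norm_le_add fun ε hε => ?_)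
  obtain ⟨N, hN⟩ := h ε hε
  exact ⟨N * C, norm_sum_range_le_of_forall_dual_encard_le hC hε.le hN⟩

/-- If a sequence `(xₙ)` in a real Banach space `X` converges uniformly weakly to
`x ∈ X`, then it is Cesàro convergent to `x`: the arithmetic means `n⁻¹ • ∑_{k<n} x_k` converge
in norm to `x`. -/
theorem statement4 {X : Type*} [NormedAddCommGroup X] [NormedSpace ℝ X] [CompleteSpace X]
    (x : ℕ → X) (l : X) (h : UnifWeaklyConvergent x l) :
    Tendsto (fun n : ℕ => (n : ℝ)⁻¹ • ∑ k ∈ Finset.range n, x k) atTop (nhds l) :=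
  statement4_general x l h
end

section
/- Let X be a real Banach space and A ⊆ X a bounded subset. Then A is a Banach–Saks set, i.e., every sequence in A has a Cesàro convergent subsequence, if and only if every sequence in A has a subsequence that converges uniformly weakly to some point of X. -/
open Filter Topology

/-- A sequence is Cesàro convergent to `l` if its arithmetic means converge in norm to `l`. -/
def CesaroConvergent {X : Type*} [NormedAddCommGroup X] [NormedSpace ℝ X]
    (x : ℕ → X) (l : X) : Prop :=
  Tendsto (fun n : ℕ => (n : ℝ)⁻¹ • ∑ k ∈ Finset.range n, x k) atTop (nhds l)

/-!
A uniformly weakly convergent bounded sequence `y → l` is Cesàro convergent: tested against a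
norm-one functional, at most `N` of the first `n` terms of `y - l` exceed `ε`, so by Hahn–Banach
`‖∑_{k<n} (y k - l)‖ ≤ N C + n ε`.

Conversely, whether the Cesàro means along an infinite `A ⊆ ℕ` are Cauchy is a Borel condition in
the Ellentuck topology, so by the Galvin–Prikry theorem every sequence has a subsequence all of
whose subsequences have Cauchy means, or none (Erdős–Magidor). In a Banach–Saks set the second case
is impossible. Finally, if such a sequence is Cesàro convergent to `l` but not uniformly weakly,
one alternates blocks on which the average of `y - l` is small with long blocks on which a single
norm-one functional exceeds `ε`; the resulting subsequence has oscillating Cesàro means.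
-/

open scoped symmDiff

namespace Ellentuck

def IsInitSeg (t : Finset ℕ) (A : Set ℕ) : Prop :=
  ↑t ⊆ A ∧ ∀ a ∈ A, a ∉ t → ∀ b ∈ t, b < a

def above (t : Finset ℕ) (M : Set ℕ) : Set ℕ :=
  {n ∈ M | ∀ b ∈ t, b < n}

noncomputable def enum (A : Set ℕ) : ℕ → ℕ :=
  Nat.nth (· ∈ A)

noncomputable def firstSeg (A : Set ℕ) (m : ℕ) : Finset ℕ :=
  (Finset.range m).image (enum A)

section InitialSegments

variable {s t : Finset ℕ} {A B M N : Set ℕ}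

lemma isInitSeg_empty (A : Set ℕ) : IsInitSeg ∅ A := by
  simp [IsInitSeg]

lemma IsInitSeg.mem_of_le (ht : IsInitSeg t A) {a b : ℕ} (ha : a ∈ A) (hb : b ∈ t) (hab : a ≤ b) :
    a ∈ t := by
  by_contra h
  exact (ht.2 a ha h b hb).not_ge hab

lemma IsInitSeg.subset_of_card_le (ht : IsInitSeg t A) (hs : IsInitSeg s A)
    (h : t.card ≤ s.card) : t ⊆ s := by
  by_contra hts
  obtain ⟨a, hat, has⟩ := Finset.not_subset.1 hts
  have hst : s ⊂ t := by
    refine ⟨fun b hb => ht.mem_of_le (hs.1 hb) hat (hs.2 a (ht.1 hat) has b hb).le, ?_⟩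
    exact fun h => has (h hat)
  exact (Finset.card_lt_card hst).not_ge h

lemma IsInitSeg.eq_of_card_eq (ht : IsInitSeg t A) (hs : IsInitSeg s A) (h : t.card = s.card) :
    t = s :=
  Finset.eq_of_subset_of_card_le (ht.subset_of_card_le hs h.le) h.ge

lemma IsInitSeg.union (ht : IsInitSeg t A) (hs : IsInitSeg s A) : IsInitSeg (t ∪ s) A := by
  rcases le_total t.card s.card with h | h
  · rwa [Finset.union_eq_right.2 (ht.subset_of_card_le hs h)]
  · rwa [Finset.union_eq_left.2 (hs.subset_of_card_le ht h)]

lemma IsInitSeg.of_subset (ht : IsInitSeg t A) (htB : ↑t ⊆ B) (hBA : B ⊆ A) : IsInitSeg t B :=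
  ⟨htB, fun a ha => ht.2 a (hBA ha)⟩

lemma IsInitSeg.trans {t u : Finset ℕ} {A : Set ℕ} (htu : IsInitSeg t ↑u) (hu : IsInitSeg u A) :
    IsInitSeg t A := by
  refine ⟨htu.1.trans hu.1, fun a ha hat b hb => ?_⟩
  by_cases hau : a ∈ u
  · exact htu.2 a hau hat b hb
  · exact hu.2 a ha hau b (htu.1 hb)

lemma isInitSeg_insert_sInf (hs : IsInitSeg s A) (hne : (A \ ↑s).Nonempty) :
    IsInitSeg (insert (sInf (A \ ↑s)) s) A := by
  have hm : sInf (A \ ↑s) ∈ A \ ↑s := Nat.sInf_mem hne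
  refine ⟨?_, fun a ha has b hb => ?_⟩
  · rw [Finset.coe_insert]
    exact Set.insert_subset hm.1 hs.1
  simp only [Finset.mem_insert, not_or] at has hb
  rcases hb with rfl | hb
  · exact (Nat.sInf_le (s := A \ ↑s) ⟨ha, has.2⟩).lt_of_ne' has.1
  · exact hs.2 a ha has.2 b hb

lemma above_infinite (t : Finset ℕ) (hM : M.Infinite) : (above t M).Infinite := by
  refine (hM.sdiff (Set.finite_Iic (t.sup id))).mono fun n hn => ⟨hn.1, fun b hb => ?_⟩
  exact (Finset.le_sup (f := id) hb).trans_lt (not_le.1 hn.2)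

lemma above_subset (t : Finset ℕ) (M : Set ℕ) : above t M ⊆ M :=
  Set.sep_subset _ _

lemma above_anti (hst : s ⊆ t) (M : Set ℕ) : above t M ⊆ above s M :=
  fun _ hn => ⟨hn.1, fun b hb => hn.2 b (hst hb)⟩

lemma enum_strictMono (hA : A.Infinite) : StrictMono (enum A) :=
  Nat.nth_strictMono hA

lemma enum_mem (hA : A.Infinite) (n : ℕ) : enum A n ∈ A :=
  Nat.nth_mem_of_infinite hA n

lemma range_enum (hA : A.Infinite) : Set.range (enum A) = A :=
  Nat.range_nth_of_infinite hA

lemma enum_range {φ : ℕ → ℕ} (hφ : StrictMono φ) : enum (Set.range φ) = φ := by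
  have hinf : (Set.range φ).Infinite := Set.infinite_range_of_injective hφ.injective
  exact (enum_strictMono hinf).range_inj hφ |>.1 (range_enum hinf)

lemma card_firstSeg (hA : A.Infinite) (m : ℕ) : (firstSeg A m).card = m := by
  rw [firstSeg, Finset.card_image_of_injective _ (enum_strictMono hA).injective,
    Finset.card_range]

lemma isInitSeg_firstSeg (hA : A.Infinite) (m : ℕ) : IsInitSeg (firstSeg A m) A := by
  refine ⟨?_, fun a ha hat b hb => ?_⟩
  · simp only [firstSeg, Finset.coe_image, Set.image_subset_iff]
    exact fun k _ => enum_mem hA k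
  · obtain ⟨k, rfl⟩ := (range_enum hA).symm.subset ha
    simp only [firstSeg, Finset.mem_image, Finset.mem_range, not_exists, not_and] at hat hb
    obtain ⟨i, hi, rfl⟩ := hb
    exact enum_strictMono hA (hi.trans_le (not_lt.1 fun h => hat k h rfl))

lemma sum_firstSeg {X : Type*} [AddCommMonoid X] (x : ℕ → X) (hA : A.Infinite) (m : ℕ) :
    ∑ i ∈ firstSeg A m, x i = ∑ k ∈ Finset.range m, x (enum A k) :=
  Finset.sum_image fun _ _ _ _ h => (enum_strictMono hA).injective h

lemma enum_eq_of_firstSeg_eq (hA : A.Infinite) (hB : B.Infinite) {m : ℕ}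
    (h : firstSeg A m = firstSeg B m) {k : ℕ} (hk : k < m) : enum A k = enum B k := by
  have hrange : ∀ C : Set ℕ, Set.range (enum C ∘ (Fin.val : Fin m → ℕ)) = ↑(firstSeg C m) := by
    intro C
    rw [firstSeg, Finset.coe_image, Finset.coe_range, ← Fin.range_val, Set.range_comp]
  have := ((enum_strictMono hA).comp Fin.val_strictMono).range_inj
    ((enum_strictMono hB).comp Fin.val_strictMono) |>.1 (by rw [hrange, hrange, h])
  exact congrFun this ⟨k, hk⟩

lemma isInitSeg_union_of_lt {S T : Finset ℕ} (h : ∀ b ∈ S, ∀ a ∈ T, b < a) :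
    IsInitSeg S ↑(S ∪ T) := by
  refine ⟨by simp, fun a ha haS b hb => h b hb a ?_⟩
  simpa [haS] using ha

lemma isInitSeg_iUnion {S : ℕ → Finset ℕ} (hS : ∀ k, IsInitSeg (S k) ↑(S (k + 1))) (k : ℕ) :
    IsInitSeg (S k) (⋃ j, ↑(S j)) := by
  have hchain : ∀ i j, i ≤ j → IsInitSeg (S i) ↑(S j) := by
    intro i j hij
    induction j, hij using Nat.le_induction with
    | base => exact ⟨subset_rfl, fun a ha hai => (hai ha).elim⟩
    | succ j _ ih => exact ih.trans (hS j)
  refine ⟨Set.subset_iUnion (fun j => (↑(S j) : Set ℕ)) k, fun a ha hak b hb => ?_⟩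
  obtain ⟨j, haj⟩ := Set.mem_iUnion.1 ha
  rcases le_total j k with hjk | hkj
  · exact (hak ((hchain j k hjk).1 haj)).elim
  · exact (hchain k j hkj).2 a haj hak b hb

lemma exists_infinite_isInitSeg_frequently {P Q : Finset ℕ → Prop}
    (hP : ∀ S : Finset ℕ, ∃ T : Finset ℕ, IsInitSeg S ↑T ∧ S.card < T.card ∧ P T)
    (hQ : ∀ S : Finset ℕ, ∃ T : Finset ℕ, IsInitSeg S ↑T ∧ S.card < T.card ∧ Q T) :
    ∃ W : Set ℕ, W.Infinite ∧ ∀ n, (∃ T : Finset ℕ, n ≤ T.card ∧ IsInitSeg T W ∧ P T) ∧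
      (∃ T : Finset ℕ, n ≤ T.card ∧ IsInitSeg T W ∧ Q T) := by
  choose p hp_init hp_card hp using hP
  choose q hq_init hq_card hq using hQ
  set S : ℕ → Finset ℕ := fun k => (q ∘ p)^[k] ∅
  have hS_succ : ∀ k, S (k + 1) = q (p (S k)) := fun k => Function.iterate_succ_apply' _ _ _
  have hS_init : ∀ k, IsInitSeg (S k) ↑(S (k + 1)) := fun k => by
    rw [hS_succ]
    exact (hp_init _).trans (hq_init _)
  have hS_card : ∀ k, k ≤ (S k).card := by
    intro k
    induction k with
    | zero => exact Nat.zero_le _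
    | succ k ih =>
      rw [hS_succ]
      have := hp_card (S k)
      have := hq_card (p (S k))
      omega
  have hW := isInitSeg_iUnion hS_init
  refine ⟨⋃ k, ↑(S k), fun hfin => ?_,
    fun n => ⟨⟨p (S n), ?_, ?_, hp _⟩, ⟨S (n + 1), ?_, hW _, ?_⟩⟩⟩
  · have := Finset.card_le_card (s := S (hfin.toFinset.card + 1))
      fun x hx => hfin.mem_toFinset.2 (Set.mem_iUnion.2 ⟨_, hx⟩)
    have := hS_card (hfin.toFinset.card + 1)
    omega
  · have := hS_card n
    have := hp_card (S n)
    omega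
  · exact (hq_init _).trans (hS_succ n ▸ hW (n + 1))
  · have := hS_card (n + 1)
    omega
  · rw [hS_succ]
    exact hq _

end InitialSegments

/-- Ellentuck's basic open set `[s, M]`; `M` is not required to lie above `s`. -/
def basicOpen (s : Finset ℕ) (M : Set ℕ) : Set (Set ℕ) :=
  {A | A.Infinite ∧ IsInitSeg s A ∧ A ⊆ ↑s ∪ M}

section BasicOpen

variable {s t t₀ : Finset ℕ} {A M N : Set ℕ}

lemma basicOpen_mono (h : M ⊆ N) : basicOpen s M ⊆ basicOpen s N :=
  fun _ hA => ⟨hA.1, hA.2.1, hA.2.2.trans (Set.union_subset_union_right _ h)⟩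

lemma self_mem_basicOpen (hA : A.Infinite) (ht : IsInitSeg t A) : A ∈ basicOpen t (A \ ↑t) :=
  ⟨hA, ht, by rw [Set.union_sdiff_self]; exact Set.subset_union_right⟩

lemma mem_basicOpen_above (hA : A ∈ basicOpen s N) (ht : IsInitSeg t A) (hst : s ⊆ t) :
    A ∈ basicOpen t (above t N) := by
  refine ⟨hA.1, ht, fun a ha => ?_⟩
  by_cases hat : a ∈ t
  · exact Or.inl hat
  · have has : a ∉ (↑s : Set ℕ) := fun h => hat (hst h)
    exact Or.inr ⟨(hA.2.2 ha).resolve_left has, fun b hb => ht.2 a ha hat b hb⟩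

lemma basicOpen_subset_basicOpen (ht₀ : IsInitSeg t₀ A) (htA : ↑t ⊆ A) (h : t₀ ⊆ t) :
    basicOpen t (A \ ↑t) ⊆ basicOpen t₀ (A \ ↑t₀) := by
  rintro B ⟨hB, htB, hBA⟩
  have hBA' : B ⊆ A := hBA.trans (Set.union_subset htA Set.sdiff_subset)
  refine ⟨hB, ht₀.of_subset ((Finset.coe_subset.2 h).trans htB.1) hBA', ?_⟩
  rw [Set.union_sdiff_self]
  exact hBA'.trans Set.subset_union_right

end BasicOpen

section AcceptReject

variable (U : Set (Set ℕ))

def Accepts (s : Finset ℕ) (M : Set ℕ) : Prop :=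
  basicOpen s M ⊆ U

def Rejects (s : Finset ℕ) (M : Set ℕ) : Prop :=
  ∀ N ⊆ M, N.Infinite → ¬Accepts U s N

variable {U} {s t : Finset ℕ} {M N : Set ℕ}

lemma Accepts.mono (h : Accepts U s M) (hNM : N ⊆ M) : Accepts U s N :=
  (basicOpen_mono hNM).trans h

lemma Rejects.mono (h : Rejects U s M) (hNM : N ⊆ M) : Rejects U s N :=
  fun N' hN' => h N' (hN'.trans hNM)

lemma Rejects.not_accepts (h : Rejects U s M) (hM : M.Infinite) : ¬Accepts U s M :=
  h M subset_rfl hM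

lemma Rejects.of_above_subset (h : Rejects U t M) (hNM : above t N ⊆ M) : Rejects U t N := by
  intro N' hN' hN'inf hacc
  exact h (above t N') (fun n hn => hNM ⟨hN' hn.1, hn.2⟩) (above_infinite t hN'inf)
    (hacc.mono (above_subset t N'))

lemma exists_accepts_or_rejects (s : Finset ℕ) (hM : M.Infinite) :
    ∃ N ⊆ M, N.Infinite ∧ (Accepts U s N ∨ Rejects U s N) := by
  by_cases h : ∃ N ⊆ M, N.Infinite ∧ Accepts U s N
  · obtain ⟨N, hNM, hN, hacc⟩ := h
    exact ⟨N, hNM, hN, Or.inl hacc⟩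
  · push Not at h
    exact ⟨M, subset_rfl, hM, Or.inr h⟩

end AcceptReject

section Diagonalization

variable {M : Set ℕ}

lemma exists_infinite_subset_forall_mem {ι : Type*} {P : ι → Set ℕ → Prop}
    (hmono : ∀ i {M N}, N ⊆ M → P i M → P i N)
    (hdense : ∀ i M, M.Infinite → ∃ N ⊆ M, N.Infinite ∧ P i N) (I : Finset ι)
    (hM : M.Infinite) : ∃ N ⊆ M, N.Infinite ∧ ∀ i ∈ I, P i N := by
  classical
  induction I using Finset.induction_on with
  | empty => exact ⟨M, subset_rfl, hM, by simp⟩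
  | insert i I _ ih =>
    obtain ⟨N, hNM, hN, hP⟩ := ih
    obtain ⟨N', hN'N, hN', hPi⟩ := hdense i N hN
    refine ⟨N', hN'N.trans hNM, hN', ?_⟩
    simp only [Finset.mem_insert, forall_eq_or_imp]
    exact ⟨hPi, fun j hj => hmono j hN'N (hP j hj)⟩

lemma exists_fusion_sequence {P : Finset ℕ → Set ℕ → Prop}
    (hmono : ∀ u {M N}, N ⊆ M → P u M → P u N)
    (hdense : ∀ u M, M.Infinite → ∃ N ⊆ M, N.Infinite ∧ P u N) (hM : M.Infinite) :
    ∃ (a : ℕ → ℕ) (Ms : ℕ → Set ℕ), StrictMono a ∧ Antitone Ms ∧ Ms 0 ⊆ M ∧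
      (∀ k, a k ∈ Ms k) ∧ ∀ k, ∀ u ⊆ (Finset.range k).image a, P u (Ms k) := by
  classical
  have hstep : ∀ (F : Finset ℕ) (M' : Set ℕ), M'.Infinite →
      ∃ N ⊆ above {sInf M'} M', N.Infinite ∧ ∀ u ⊆ insert (sInf M') F, P u N := by
    intro F M' hM'
    obtain ⟨N, hN, hNinf, hPN⟩ := exists_infinite_subset_forall_mem hmono hdense
      (insert (sInf M') F).powerset (above_infinite _ hM')
    exact ⟨N, hN, hNinf, fun u hu => hPN u (Finset.mem_powerset.2 hu)⟩
  choose next hnext_sub hnext_inf hnext_P using hstep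
  obtain ⟨M₀, hM₀M, hM₀, hP₀⟩ := hdense ∅ M hM
  let q : ℕ → Finset ℕ × {M' : Set ℕ // M'.Infinite} := fun k => Nat.rec (∅, ⟨M₀, hM₀⟩)
    (fun _ p => (insert (sInf p.2.1) p.1, ⟨next p.1 p.2.1 p.2.2, hnext_inf _ _ _⟩)) k
  let Ms : ℕ → Set ℕ := fun k => (q k).2.1
  let a : ℕ → ℕ := fun k => sInf (Ms k)
  have ha_mem : ∀ k, a k ∈ Ms k := fun k => Nat.sInf_mem (q k).2.2.nonempty
  have hMs_succ : ∀ k, Ms (k + 1) ⊆ above {a k} (Ms k) := fun k => hnext_sub _ _ _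
  have hq : ∀ k, (q k).1 = (Finset.range k).image a := by
    intro k
    induction k with
    | zero => rfl
    | succ k ih => rw [Finset.range_add_one, Finset.image_insert, ← ih]
  refine ⟨a, Ms, strictMono_nat_of_lt_succ fun k =>
      (hMs_succ k (ha_mem (k + 1))).2 (a k) (Finset.mem_singleton_self _),
    antitone_nat_of_succ_le fun k => (hMs_succ k).trans (above_subset _ _), hM₀M, ha_mem, ?_⟩
  rintro (_ | k) u hu
  · rw [Finset.range_zero, Finset.image_empty, Finset.subset_empty] at hu
    exact hu ▸ hP₀
  · rw [← hq (k + 1)] at hu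
    exact hnext_P _ _ _ u hu

theorem exists_diagonal {P : Finset ℕ → Set ℕ → Prop}
    (hmono : ∀ u {M N}, N ⊆ M → P u M → P u N)
    (hdense : ∀ u M, M.Infinite → ∃ N ⊆ M, N.Infinite ∧ P u N) (hM : M.Infinite) :
    ∃ N ⊆ M, N.Infinite ∧ ∀ u : Finset ℕ, ↑u ⊆ N → P u (above u N) := by
  classical
  obtain ⟨a, Ms, ha, hMs_anti, hMs₀, ha_mem, hP⟩ := exists_fusion_sequence hmono hdense hM
  refine ⟨Set.range a, ?_, Set.infinite_range_of_injective ha.injective, fun u hu => ?_⟩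
  · rintro _ ⟨k, rfl⟩
    exact hMs₀ (hMs_anti (Nat.zero_le k) (ha_mem k))
  have hex : ∃ k, ∀ b ∈ u, b < a k :=
    ⟨u.sup id + 1, fun b hb => (Nat.lt_succ_of_le (Finset.le_sup (f := id) hb)).trans_le
      (ha.id_le _)⟩
  refine hmono u (fun n hn => ?_) (hP (Nat.find hex) u fun b hb => ?_)
  · obtain ⟨i, rfl⟩ := hn.1
    exact hMs_anti (Nat.find_min' hex hn.2) (ha_mem i)
  · obtain ⟨i, rfl⟩ := hu hb
    exact Finset.mem_image_of_mem a
      (Finset.mem_range.2 (ha.lt_iff_lt.1 (Nat.find_spec hex _ hb)))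

end Diagonalization

lemma diff_subset_of_mem_basicOpen {s : Finset ℕ} {A N : Set ℕ} (hA : A ∈ basicOpen s N) :
    A \ ↑s ⊆ N :=
  fun _ hx => (hA.2.2 hx.1).resolve_left hx.2

def IsEllentuckOpen (U : Set (Set ℕ)) : Prop :=
  ∀ A ∈ U, ∃ t, IsInitSeg t A ∧ basicOpen t (A \ ↑t) ⊆ U

def IsRamseyNull (𝒩 : Set (Set ℕ)) : Prop :=
  ∀ s M, M.Infinite → ∃ N ⊆ M, N.Infinite ∧ Disjoint (basicOpen s N) 𝒩

def IsCompletelyRamsey (𝒜 : Set (Set ℕ)) : Prop :=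
  ∀ s M, M.Infinite → ∃ N ⊆ M, N.Infinite ∧ (basicOpen s N ⊆ 𝒜 ∨ Disjoint (basicOpen s N) 𝒜)

/-- The Baire property in the Ellentuck topology, whose meagre sets are the Ramsey null ones. -/
def HasBaireProperty (𝒜 : Set (Set ℕ)) : Prop :=
  ∃ U, IsEllentuckOpen U ∧ IsRamseyNull (𝒜 ∆ U)

section GalvinPrikry

variable {U : Set (Set ℕ)} {s : Finset ℕ} {M : Set ℕ}

lemma Rejects.exists_rejects_insert (hrej : Rejects U s M) (hM : M.Infinite) :
    ∃ N ⊆ M, N.Infinite ∧ ∀ a ∈ N, Rejects U (insert a s) N := by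
  classical
  let Decides : ℕ → Set ℕ → Prop := fun a N => Accepts U (insert a s) N ∨ Rejects U (insert a s) N
  have hmono : ∀ a {M N}, N ⊆ M → Decides a M → Decides a N :=
    fun _ _ _ hNM h => h.imp (·.mono hNM) (·.mono hNM)
  obtain ⟨N, hNM, hN, hdec⟩ := exists_diagonal (P := fun u N => ∀ a ∈ u, Decides a N)
    (fun _ _ _ hNM h a ha => hmono a hNM (h a ha))
    (fun u _ hM => exists_infinite_subset_forall_mem hmono
      (fun _ _ hM => exists_accepts_or_rejects _ hM) u hM) hM
  let R := {a ∈ N | Rejects U (insert a s) (above {a} N)}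
  have hacc : Accepts U s (N \ R) := by
    intro A hA
    have hne : (A \ ↑s).Nonempty := (hA.1.sdiff s.finite_toSet).nonempty
    set a := sInf (A \ ↑s)
    have ha : a ∈ N \ R := diff_subset_of_mem_basicOpen hA (Nat.sInf_mem hne)
    have haccA : Accepts U (insert a s) (above {a} N) :=
      (hdec {a} (by simpa using ha.1) a (Finset.mem_singleton_self a)).resolve_right
        fun h => ha.2 ⟨ha.1, h⟩
    have habove : above (insert a s) (N \ R) ⊆ above {a} N := fun n hn =>
      ⟨hn.1.1, by simpa using hn.2 a (Finset.mem_insert_self a s)⟩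
    exact haccA (basicOpen_mono habove
      (mem_basicOpen_above hA (isInitSeg_insert_sInf hA.2.1 hne) (Finset.subset_insert a s)))
  have hR : R.Infinite := by
    have hfin : (N \ R).Finite := by
      by_contra hinf
      exact (hrej.mono (Set.sdiff_subset.trans hNM)).not_accepts hinf hacc
    exact (hN.sdiff hfin).mono fun a ha => by_contra fun h => ha.2 ⟨ha.1, h⟩
  refine ⟨R, (Set.sep_subset _ _).trans hNM, hR, fun a ha => ha.2.of_above_subset ?_⟩
  exact fun n hn => ⟨hn.1.1, by simpa using hn.2 a (Finset.mem_insert_self a s)⟩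

lemma Rejects.exists_forall_rejects_union (hrej : Rejects U s M) (hM : M.Infinite) :
    ∃ N ⊆ M, N.Infinite ∧ ∀ u : Finset ℕ, ↑u ⊆ N → Rejects U (s ∪ u) (above u N) := by
  classical
  obtain ⟨N, hNM, hN, hP⟩ := exists_diagonal
    (P := fun u N => Accepts U (s ∪ u) N ∨ ∀ a ∈ N, Rejects U (insert a (s ∪ u)) N)
    (fun _ _ _ hNM h => h.imp (·.mono hNM) fun h a ha => (h a (hNM ha)).mono hNM)
    (fun u M hM => by
      obtain ⟨N, hNM, hN, hacc | hrej⟩ := exists_accepts_or_rejects (U := U) (s ∪ u) hM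
      · exact ⟨N, hNM, hN, Or.inl hacc⟩
      · obtain ⟨N', hN'N, hN', hrej'⟩ := hrej.exists_rejects_insert hN
        exact ⟨N', hN'N.trans hNM, hN', Or.inr hrej'⟩) hM
  refine ⟨N, hNM, hN, fun u => ?_⟩
  induction u using Finset.induction_on_max with
  | empty => intro _; simpa [above] using hrej.mono hNM
  | insert a u hlt ih =>
    intro hu
    rw [Finset.coe_insert, Set.insert_subset_iff] at hu
    have := (hP u hu.2).resolve_left ((ih hu.2).not_accepts (above_infinite u hN)) a ⟨hu.1, hlt⟩
    rw [Finset.union_insert]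
    exact this.mono (above_anti (Finset.subset_insert a u) N)

/-- The Galvin–Prikry theorem for Ellentuck open families: an `A ∈ U` in `basicOpen s N` would
have an initial segment `s ∪ u` accepted by `A \ (s ∪ u) ⊆ above u N`. -/
theorem IsEllentuckOpen.isCompletelyRamsey (hU : IsEllentuckOpen U) : IsCompletelyRamsey U := by
  classical
  intro s M hM
  obtain ⟨M', hM'M, hM', hacc | hrej⟩ := exists_accepts_or_rejects (U := U) s hM
  · exact ⟨M', hM'M, hM', Or.inl hacc⟩
  obtain ⟨N, hNM', hN, hrejN⟩ := hrej.exists_forall_rejects_union hM'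
  refine ⟨N, hNM'.trans hM'M, hN, Or.inr (Set.disjoint_left.2 fun A hA hAU => ?_)⟩
  obtain ⟨t₀, ht₀, ht₀U⟩ := hU A hAU
  set t := t₀ ∪ s
  have ht : IsInitSeg t A := ht₀.union hA.2.1
  have hst : s ⊆ t := Finset.subset_union_right
  have hu : ↑(t \ s) ⊆ N := fun n hn => by
    rw [Finset.coe_sdiff] at hn
    exact diff_subset_of_mem_basicOpen hA ⟨ht.1 hn.1, hn.2⟩
  have hacc : Accepts U (s ∪ (t \ s)) (A \ ↑t) := by
    rw [Finset.union_sdiff_of_subset hst]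
    exact (basicOpen_subset_basicOpen ht₀ ht.1 Finset.subset_union_left).trans ht₀U
  have habove : A \ ↑t ⊆ above (t \ s) N := fun x hx =>
    ⟨diff_subset_of_mem_basicOpen hA ⟨hx.1, fun h => hx.2 (hst h)⟩,
      fun b hb => ht.2 x hx.1 hx.2 b (Finset.sdiff_subset hb)⟩
  exact hrejN _ hu (A \ ↑t) habove (hA.1.sdiff t.finite_toSet) hacc

end GalvinPrikry

section BaireProperty

variable {𝒜 𝒩 𝒩' : Set (Set ℕ)}

lemma IsRamseyNull.mono (h𝒩 : IsRamseyNull 𝒩) (h : 𝒩' ⊆ 𝒩) : IsRamseyNull 𝒩' :=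
  fun s M hM => (h𝒩 s M hM).imp fun _ ⟨hNM, hN, hd⟩ => ⟨hNM, hN, hd.mono_right h⟩

theorem IsRamseyNull.iUnion {𝒩 : ℕ → Set (Set ℕ)} (h𝒩 : ∀ n, IsRamseyNull (𝒩 n)) :
    IsRamseyNull (⋃ n, 𝒩 n) := by
  intro s M hM
  let Avoids : ℕ → Finset ℕ → Set ℕ → Prop := fun n u N => Disjoint (basicOpen (s ∪ u) N) (𝒩 n)
  have hmono : ∀ n u {M N}, N ⊆ M → Avoids n u M → Avoids n u N :=
    fun _ _ _ _ hNM h => h.mono_left (basicOpen_mono hNM)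
  obtain ⟨N, hNM, hN, hP⟩ := exists_diagonal (P := fun u N => ∀ n ≤ u.card, Avoids n u N)
    (fun u _ _ hNM h n hn => hmono n u hNM (h n hn))
    (fun u M hM => by
      obtain ⟨N, hNM, hN, h⟩ := exists_infinite_subset_forall_mem (fun n _ _ => hmono n u)
        (fun n M hM => h𝒩 n (s ∪ u) M hM) (Finset.range (u.card + 1)) hM
      exact ⟨N, hNM, hN, fun n hn => h n (Finset.mem_range_succ_iff.2 hn)⟩) hM
  refine ⟨N, hNM, hN, Set.disjoint_iUnion_right.2 fun n => Set.disjoint_left.2 fun A hA hA𝒩 => ?_⟩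
  set t := firstSeg A (s.card + n)
  have ht : IsInitSeg t A := isInitSeg_firstSeg hA.1 _
  have hst : s ⊆ t := hA.2.1.subset_of_card_le ht (by rw [card_firstSeg hA.1]; omega)
  have hu : ↑(t \ s) ⊆ N := fun x hx => by
    rw [Finset.coe_sdiff] at hx
    exact diff_subset_of_mem_basicOpen hA ⟨ht.1 hx.1, hx.2⟩
  have hcard : (t \ s).card = n := by
    rw [Finset.card_sdiff_of_subset hst, card_firstSeg hA.1]
    omega
  have hmem : A ∈ basicOpen (s ∪ (t \ s)) (above (t \ s) N) := by
    rw [Finset.union_sdiff_of_subset hst]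
    exact basicOpen_mono (above_anti Finset.sdiff_subset N) (mem_basicOpen_above hA ht hst)
  exact Set.disjoint_left.1 (hP _ hu n hcard.ge) hmem hA𝒩

lemma IsEllentuckOpen.iUnion {U : ℕ → Set (Set ℕ)} (hU : ∀ n, IsEllentuckOpen (U n)) :
    IsEllentuckOpen (⋃ n, U n) := by
  intro A hA
  obtain ⟨n, hAn⟩ := Set.mem_iUnion.1 hA
  obtain ⟨t, ht, hsub⟩ := hU n A hAn
  exact ⟨t, ht, hsub.trans (Set.subset_iUnion U n)⟩

lemma IsCompletelyRamsey.compl (h : IsCompletelyRamsey 𝒜) : IsCompletelyRamsey 𝒜ᶜ :=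
  fun s M hM => (h s M hM).imp fun _ ⟨hNM, hN, hd⟩ =>
    ⟨hNM, hN, hd.symm.imp Set.subset_compl_iff_disjoint_right.2
      Set.disjoint_compl_right_iff_subset.2⟩

lemma HasBaireProperty.isCompletelyRamsey (h : HasBaireProperty 𝒜) : IsCompletelyRamsey 𝒜 := by
  obtain ⟨U, hU, hnull⟩ := h
  intro s M hM
  obtain ⟨N₁, hN₁M, hN₁, hd⟩ := hnull s M hM
  obtain ⟨N, hNN₁, hN, hsub | hdisj⟩ := hU.isCompletelyRamsey s N₁ hN₁
  · refine ⟨N, hNN₁.trans hN₁M, hN, Or.inl fun A hA => ?_⟩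
    by_contra hA𝒜
    exact Set.disjoint_left.1 hd (basicOpen_mono hNN₁ hA) (Or.inr ⟨hsub hA, hA𝒜⟩)
  · refine ⟨N, hNN₁.trans hN₁M, hN, Or.inr (Set.disjoint_left.2 fun A hA hA𝒜 => ?_)⟩
    exact Set.disjoint_left.1 hd (basicOpen_mono hNN₁ hA)
      (Or.inl ⟨hA𝒜, Set.disjoint_left.1 hdisj hA⟩)

/-- The witness is the Ellentuck interior of `𝒜`. -/
lemma IsCompletelyRamsey.hasBaireProperty (h : IsCompletelyRamsey 𝒜) : HasBaireProperty 𝒜 := by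
  set U := {A : Set ℕ | A.Infinite ∧ ∃ t, IsInitSeg t A ∧ basicOpen t (A \ ↑t) ⊆ 𝒜}
  have hU𝒜 : U ⊆ 𝒜 := fun A ⟨hA, t, ht, hsub⟩ => hsub (self_mem_basicOpen hA ht)
  refine ⟨U, ?_, ?_⟩
  · rintro A ⟨-, t, ht, hsub⟩
    refine ⟨t, ht, fun B hB => ⟨hB.1, t, hB.2.1, ?_⟩⟩
    have hBA : B \ ↑t ⊆ A \ ↑t := fun x hx => ⟨(diff_subset_of_mem_basicOpen hB hx).1, hx.2⟩
    exact (basicOpen_mono hBA).trans hsub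
  intro s M hM
  obtain ⟨N, hNM, hN, hsub | hdisj⟩ := h s M hM
  · refine ⟨N, hNM, hN, Set.disjoint_left.2 fun A hA hA' => ?_⟩
    have hAU : A ∈ U :=
      ⟨hA.1, s, hA.2.1, (basicOpen_mono (diff_subset_of_mem_basicOpen hA)).trans hsub⟩
    rcases hA' with ⟨-, hAU'⟩ | ⟨-, hA𝒜⟩
    · exact hAU' hAU
    · exact hA𝒜 (hsub hA)
  · refine ⟨N, hNM, hN, Set.disjoint_left.2 fun A hA hA' => ?_⟩
    rcases hA' with ⟨hA𝒜, -⟩ | ⟨hAU, -⟩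
    · exact Set.disjoint_left.1 hdisj hA hA𝒜
    · exact Set.disjoint_left.1 hdisj hA (hU𝒜 hAU)

lemma IsEllentuckOpen.hasBaireProperty {U : Set (Set ℕ)} (hU : IsEllentuckOpen U) :
    HasBaireProperty U :=
  hU.isCompletelyRamsey.hasBaireProperty

lemma HasBaireProperty.compl (h : HasBaireProperty 𝒜) : HasBaireProperty 𝒜ᶜ :=
  h.isCompletelyRamsey.compl.hasBaireProperty

lemma HasBaireProperty.iUnion {𝒜 : ℕ → Set (Set ℕ)} (h : ∀ n, HasBaireProperty (𝒜 n)) :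
    HasBaireProperty (⋃ n, 𝒜 n) := by
  choose U hU hnull using h
  exact ⟨⋃ n, U n, IsEllentuckOpen.iUnion hU,
    (IsRamseyNull.iUnion hnull).mono Set.iUnion_symmDiff_iUnion_subset⟩

lemma HasBaireProperty.iInter {𝒜 : ℕ → Set (Set ℕ)} (h : ∀ n, HasBaireProperty (𝒜 n)) :
    HasBaireProperty (⋂ n, 𝒜 n) := by
  simpa [Set.compl_iUnion] using (HasBaireProperty.iUnion fun n => (h n).compl).compl

lemma isEllentuckOpen_setOf_firstSeg (m : ℕ) {q : Set ℕ → Prop}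
    (hq : ∀ A B, A.Infinite → B.Infinite → firstSeg A m = firstSeg B m → q A → q B) :
    IsEllentuckOpen {A | A.Infinite ∧ q A} := by
  rintro A ⟨hA, hqA⟩
  refine ⟨firstSeg A m, isInitSeg_firstSeg hA m, fun B hB => ⟨hB.1, hq A B hA hB.1 ?_ hqA⟩⟩
  exact hB.2.1.eq_of_card_eq (isInitSeg_firstSeg hB.1 m)
    (by rw [card_firstSeg hA, card_firstSeg hB.1])

end BaireProperty

end Ellentuck

open Ellentuck

lemma Set.exists_finset_subset_card_eq {α : Type*} {s : Set α} {n : ℕ} (h : (n : ℕ∞) ≤ s.encard) :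
    ∃ T : Finset α, ↑T ⊆ s ∧ T.card = n := by
  obtain ⟨t, hts, ht⟩ := Set.exists_subset_encard_eq h
  have hfin : t.Finite := Set.finite_of_encard_eq_coe ht
  refine ⟨hfin.toFinset, by simpa using hts, ?_⟩
  rw [← ENat.natCast_inj, ← hfin.encard_eq_coe_toFinset_card, ht]

section CesaroMeans

variable {X : Type*} [NormedAddCommGroup X] [NormedSpace ℝ X]

noncomputable def cesaroMean (x : ℕ → X) (n : ℕ) : X :=
  (n : ℝ)⁻¹ • ∑ k ∈ Finset.range n, x k

lemma inv_card_smul_sum_sub (y : ℕ → X) (l : X) {T : Finset ℕ} (hT : T.Nonempty) :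
    (T.card : ℝ)⁻¹ • ∑ i ∈ T, y i - l = (T.card : ℝ)⁻¹ • ∑ i ∈ T, (y i - l) := by
  rw [Finset.sum_sub_distrib, smul_sub, Finset.sum_const, ← Nat.cast_smul_eq_nsmul ℝ, smul_smul,
    inv_mul_cancel₀ (Nat.cast_ne_zero.2 hT.card_pos.ne'), one_smul]

lemma norm_inv_card_smul_sum_sub (y : ℕ → X) (l : X) {T : Finset ℕ} (hT : T.Nonempty) :
    ‖(T.card : ℝ)⁻¹ • ∑ i ∈ T, y i - l‖ = ‖∑ i ∈ T, (y i - l)‖ / T.card := by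
  rw [inv_card_smul_sum_sub y l hT, norm_smul, norm_inv, Real.norm_natCast, inv_mul_eq_div]

lemma abs_apply_le_of_norm_le_one {f : X →L[ℝ] ℝ} (hf : ‖f‖ ≤ 1) (v : X) : |f v| ≤ ‖v‖ :=
  (f.le_opNorm v).trans (mul_le_of_le_one_left (norm_nonneg _) hf)

lemma sum_abs_le_of_encard_le {z : ℕ → ℝ} {C ε : ℝ} {N : ℕ} (hC : ∀ k, |z k| ≤ C) (hε : 0 ≤ ε)
    (hN : {k | ε < |z k|}.encard ≤ N) (S : Finset ℕ) :
    ∑ k ∈ S, |z k| ≤ N * C + S.card * ε := by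
  classical
  have hC0 : 0 ≤ C := (abs_nonneg _).trans (hC 0)
  set B := S.filter fun k => ε < |z k|
  have hB : (B.card : ℝ) ≤ N := by
    have hBsub : (↑B : Set ℕ) ⊆ {k | ε < |z k|} := fun k hk => (Finset.mem_filter.1 hk).2
    have := (Set.encard_mono hBsub).trans hN
    rw [Set.encard_coe_eq_coe_finsetCard] at this
    exact_mod_cast this
  rw [← Finset.sum_filter_add_sum_filter_not S fun k => ε < |z k|]
  calc ∑ k ∈ B, |z k| + ∑ k ∈ S.filter (fun k => ¬ε < |z k|), |z k|
      ≤ ∑ _k ∈ B, C + ∑ _k ∈ S.filter (fun k => ¬ε < |z k|), ε :=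
        add_le_add (Finset.sum_le_sum fun k _ => hC k)
          (Finset.sum_le_sum fun k hk => not_lt.1 (Finset.mem_filter.1 hk).2)
    _ = B.card * C + (S.filter fun k => ¬ε < |z k|).card * ε := by
        simp only [Finset.sum_const, nsmul_eq_mul]
    _ ≤ N * C + S.card * ε :=
        add_le_add (mul_le_mul_of_nonneg_right hB hC0)
          (mul_le_mul_of_nonneg_right (by exact_mod_cast Finset.card_filter_le _ _) hε)

lemma norm_sum_sub_le_of_encard_le {y : ℕ → X} {l : X} {C ε : ℝ} {N : ℕ}
    (hC : ∀ n, ‖y n - l‖ ≤ C) (hε : 0 ≤ ε)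
    (hN : ∀ f : X →L[ℝ] ℝ, ‖f‖ ≤ 1 → {n | ε < |f (y n - l)|}.encard ≤ N) (S : Finset ℕ) :
    ‖∑ k ∈ S, (y k - l)‖ ≤ N * C + S.card * ε := by
  obtain ⟨g, hg, hgv⟩ := exists_dual_vector'' ℝ (∑ k ∈ S, (y k - l))
  have hgC : ∀ k, |g (y k - l)| ≤ C := fun k => (abs_apply_le_of_norm_le_one hg _).trans (hC k)
  calc ‖∑ k ∈ S, (y k - l)‖ = ∑ k ∈ S, g (y k - l) := by rw [← map_sum, hgv]; rfl
    _ ≤ ∑ k ∈ S, |g (y k - l)| := Finset.sum_le_sum fun k _ => le_abs_self _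
    _ ≤ N * C + S.card * ε := sum_abs_le_of_encard_le hgC hε (hN g hg) S

theorem UnifWeaklyConvergent.cesaroConvergent {y : ℕ → X} {l : X} {C : ℝ}
    (hy : UnifWeaklyConvergent y l) (hC : ∀ n, ‖y n - l‖ ≤ C) : CesaroConvergent y l := by
  rw [CesaroConvergent, Metric.tendsto_atTop]
  intro ε hε
  obtain ⟨N, hN⟩ := hy (ε / 2) (half_pos hε)
  obtain ⟨n₀, hn₀⟩ := exists_nat_gt (2 * N * C / ε)
  refine ⟨n₀ + 1, fun n hn => ?_⟩
  have hn : 2 * N * C < n * ε := by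
    rw [← div_lt_iff₀ hε]
    exact hn₀.trans (by exact_mod_cast hn)
  have hsum := norm_sum_sub_le_of_encard_le hC (half_pos hε).le hN (Finset.range n)
  have hmean := norm_inv_card_smul_sum_sub y l (Finset.nonempty_range_iff.2 (by omega : n ≠ 0))
  rw [Finset.card_range] at hsum hmean
  rw [dist_eq_norm, hmean, div_lt_iff₀ (by exact_mod_cast (by omega : 0 < n))]
  linarith

lemma cesaroMean_comp_enum {y : ℕ → X} {W : Set ℕ} (hW : W.Infinite) {T : Finset ℕ}
    (hT : IsInitSeg T W) : cesaroMean (y ∘ enum W) T.card = (T.card : ℝ)⁻¹ • ∑ i ∈ T, y i := by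
  rw [cesaroMean, ← (isInitSeg_firstSeg hW _).eq_of_card_eq hT (card_firstSeg hW _),
    sum_firstSeg y hW, card_firstSeg hW]
  rfl

lemma CesaroConvergent.eventually_norm_sum_sub_le {y : ℕ → X} {l : X}
    (hy : CesaroConvergent y l) {δ : ℝ} (hδ : 0 < δ) :
    ∀ᶠ q in atTop, ‖∑ i ∈ Finset.range q, (y i - l)‖ ≤ δ * q := by
  filter_upwards [Metric.tendsto_nhds.1 hy δ hδ, eventually_ge_atTop 1] with q hq hq1
  have hmean := norm_inv_card_smul_sum_sub y l (Finset.nonempty_range_iff.2 (by omega : q ≠ 0))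
  rw [Finset.card_range] at hmean
  rw [dist_eq_norm, hmean, div_lt_iff₀ (by exact_mod_cast hq1)] at hq
  linarith

lemma exists_isInitSeg_norm_sum_le {y : ℕ → X} {l : X} (hy : CesaroConvergent y l) {δ : ℝ}
    (hδ : 0 < δ) (S : Finset ℕ) :
    ∃ T : Finset ℕ, IsInitSeg S ↑T ∧ S.card < T.card ∧ ‖∑ i ∈ T, (y i - l)‖ ≤ δ * T.card := by
  set p := S.sup id + 1
  have hSp : ∀ b ∈ S, b < p := fun b hb => Nat.lt_succ_of_le (Finset.le_sup (f := id) hb)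
  -- `T = S ∪ [p, q)`: the sum over `T` is the fixed vector `c` plus the `o(q)` sum over `range q`
  set c := ∑ i ∈ S, (y i - l) - ∑ i ∈ Finset.range p, (y i - l) with hc
  obtain ⟨q, hq_large, hrange⟩ := ((tendsto_natCast_atTop_atTop (R := ℝ)).eventually_ge_atTop
    (2 * ‖c‖ / δ + 2 * p + 1) |>.and (hy.eventually_norm_sum_sub_le (half_pos hδ))).exists
  have hcδ : 0 ≤ 2 * ‖c‖ / δ := by positivity
  have hpq : p < q := by exact_mod_cast (show (p : ℝ) < q by linarith)
  have hdisj : Disjoint S (Finset.Ico p q) :=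
    Finset.disjoint_left.2 fun b hb hb' => (hSp b hb).not_ge (Finset.mem_Ico.1 hb').1
  refine ⟨S ∪ Finset.Ico p q, isInitSeg_union_of_lt fun b hb a ha =>
    (hSp b hb).trans_le (Finset.mem_Ico.1 ha).1, ?_, ?_⟩
  · rw [Finset.card_union_of_disjoint hdisj, Nat.card_Ico]
    omega
  have hsum : ∑ i ∈ S ∪ Finset.Ico p q, (y i - l) = c + ∑ i ∈ Finset.range q, (y i - l) := by
    rw [Finset.sum_union hdisj, Finset.sum_Ico_eq_sub _ hpq.le, hc]
    abel
  have hcard : (q : ℝ) - p ≤ (S ∪ Finset.Ico p q).card := by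
    rw [Finset.card_union_of_disjoint hdisj, Nat.card_Ico, Nat.cast_add S.card,
      Nat.cast_sub hpq.le]
    linarith [(S.card.cast_nonneg : (0 : ℝ) ≤ S.card)]
  have hq_δ : 2 * ‖c‖ + 2 * p * δ ≤ q * δ := by
    have := mul_le_mul_of_nonneg_right hq_large hδ.le
    rw [add_mul, add_mul, div_mul_cancel₀ _ hδ.ne'] at this
    linarith
  rw [hsum]
  calc ‖c + ∑ i ∈ Finset.range q, (y i - l)‖ ≤ ‖c‖ + δ / 2 * q :=
        (norm_add_le _ _).trans (add_le_add_right hrange _)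
    _ ≤ δ * (q - p) := by linarith
    _ ≤ δ * (S ∪ Finset.Ico p q).card := mul_le_mul_of_nonneg_left hcard hδ.le

lemma exists_isInitSeg_le_norm_sum {y : ℕ → X} {l : X} {C ε : ℝ} (hC : ∀ n, ‖y n - l‖ ≤ C)
    (hε : 0 < ε) (hbad : ∀ K L : ℕ, ∃ f : X →L[ℝ] ℝ, ‖f‖ ≤ 1 ∧
      ∃ T : Finset ℕ, L ≤ T.card ∧ ∀ i ∈ T, K < i ∧ ε < f (y i - l)) (S : Finset ℕ) :
    ∃ T : Finset ℕ, IsInitSeg S ↑T ∧ S.card < T.card ∧ ε / 2 * T.card ≤ ‖∑ i ∈ T, (y i - l)‖ := by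
  -- enough new terms with `f > ε` to outweigh `f ≥ -C` on the terms of `S`
  obtain ⟨f, hf, T, hTcard, hT⟩ := hbad (S.sup id) (⌈S.card * (2 * C / ε + 1)⌉₊ + 1)
  have hST : ∀ b ∈ S, ∀ a ∈ T, b < a := fun b hb a ha =>
    (Finset.le_sup (f := id) hb).trans_lt (hT a ha).1
  have hdisj : Disjoint S T := Finset.disjoint_left.2 fun a haS haT => (hST a haS a haT).false
  refine ⟨S ∪ T, isInitSeg_union_of_lt hST, ?_, ?_⟩
  · rw [Finset.card_union_of_disjoint hdisj]
    omega
  have hfS : -(S.card * C) ≤ f (∑ i ∈ S, (y i - l)) := by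
    refine neg_le_of_abs_le ((abs_apply_le_of_norm_le_one hf _).trans ?_)
    refine (norm_sum_le _ _).trans ?_
    simpa using Finset.sum_le_sum fun i (_ : i ∈ S) => hC i
  have hfT : T.card * ε ≤ f (∑ i ∈ T, (y i - l)) := by
    rw [map_sum]
    simpa using Finset.card_nsmul_le_sum T _ ε fun i hi => (hT i hi).2.le
  have hTlarge : S.card * (2 * C / ε + 1) ≤ T.card :=
    (Nat.le_ceil _).trans (by exact_mod_cast (Nat.le_succ _).trans hTcard)
  have hkey : S.card * C + S.card * (ε / 2) ≤ T.card * (ε / 2) := by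
    have := mul_le_mul_of_nonneg_right hTlarge (half_pos hε).le
    have hrw : S.card * (2 * C / ε + 1) * (ε / 2) = S.card * C + S.card * (ε / 2) := by
      field_simp
    linarith
  calc ε / 2 * (S ∪ T).card = ε / 2 * (S.card + T.card) := by
        rw [Finset.card_union_of_disjoint hdisj, Nat.cast_add]
    _ ≤ f (∑ i ∈ S, (y i - l)) + f (∑ i ∈ T, (y i - l)) := by linarith
    _ = f (∑ i ∈ S ∪ T, (y i - l)) := by rw [Finset.sum_union hdisj, map_add]
    _ ≤ ‖∑ i ∈ S ∪ T, (y i - l)‖ := (le_abs_self _).trans (abs_apply_le_of_norm_le_one hf _)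

lemma exists_large_finset_of_not_unifWeaklyConvergent {y : ℕ → X} {l : X}
    (h : ¬UnifWeaklyConvergent y l) : ∃ ε > 0, ∀ K L : ℕ, ∃ f : X →L[ℝ] ℝ, ‖f‖ ≤ 1 ∧
      ∃ T : Finset ℕ, L ≤ T.card ∧ ∀ i ∈ T, K < i ∧ ε < f (y i - l) := by
  classical
  simp only [UnifWeaklyConvergent, not_forall, not_exists, not_le, exists_prop] at h
  obtain ⟨ε, hε, h⟩ := h
  refine ⟨ε, hε, fun K L => ?_⟩
  obtain ⟨f, hf, hlt⟩ := h (2 * L + K + 1)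
  obtain ⟨B, hBsub, hBcard⟩ := Set.exists_finset_subset_card_eq (n := 2 * L + K + 2) (by
    rw [show ((2 * L + K + 2 : ℕ) : ℕ∞) = ((2 * L + K + 1 : ℕ) : ℕ∞) + 1 by push_cast; ring]
    exact Order.add_one_le_of_lt hlt)
  have hsmall : (B.filter fun i => ¬K < i).card ≤ K + 1 :=
    (Finset.card_le_card fun i hi => Finset.mem_range.2 (by simp at hi; omega)).trans
      (Finset.card_range _).le
  have hsplit := Finset.card_filter_add_card_filter_not (s := B) (K < ·)
  set B' := B.filter (K < ·)
  have hB' : 2 * L + 1 ≤ B'.card := by omega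
  set Pos := B'.filter fun i => ε < f (y i - l)
  set Neg := B'.filter fun i => ε < (-f) (y i - l)
  have hcover : B' ⊆ Pos ∪ Neg := fun i hi => by
    have hi' : ε < |f (y i - l)| := hBsub (Finset.mem_of_mem_filter i hi)
    rcases lt_abs.1 hi' with h | h
    · exact Finset.mem_union_left _ (Finset.mem_filter.2 ⟨hi, h⟩)
    · exact Finset.mem_union_right _ (Finset.mem_filter.2 ⟨hi, h⟩)
  have := (Finset.card_le_card hcover).trans (Finset.card_union_le Pos Neg)
  by_cases hPos : L ≤ Pos.card
  · refine ⟨f, hf, Pos, hPos, fun i hi => ?_⟩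
    simp only [Pos, B', Finset.mem_filter] at hi
    exact ⟨hi.1.2, hi.2⟩
  · refine ⟨-f, by rwa [norm_neg], Neg, by omega, fun i hi => ?_⟩
    simp only [Neg, B', Finset.mem_filter] at hi
    exact ⟨hi.1.2, hi.2⟩

theorem unifWeaklyConvergent_of_forall_cauchySeq {y : ℕ → X} {l : X} {C : ℝ}
    (hC : ∀ n, ‖y n - l‖ ≤ C) (hy : CesaroConvergent y l)
    (hsub : ∀ φ : ℕ → ℕ, StrictMono φ → CauchySeq (cesaroMean (y ∘ φ))) :
    UnifWeaklyConvergent y l := by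
  by_contra hUW
  obtain ⟨ε, hε, hbad⟩ := exists_large_finset_of_not_unifWeaklyConvergent hUW
  obtain ⟨W, hW, hfreq⟩ := exists_infinite_isInitSeg_frequently
    (exists_isInitSeg_norm_sum_le hy (by positivity : 0 < ε / 8))
    (exists_isInitSeg_le_norm_sum hC hε hbad)
  have hmean : ∀ T : Finset ℕ, IsInitSeg T W → T.Nonempty →
      ‖cesaroMean (y ∘ enum W) T.card - l‖ = ‖∑ i ∈ T, (y i - l)‖ / T.card := fun T hT hne => by
    rw [cesaroMean_comp_enum hW hT, norm_inv_card_smul_sum_sub y l hne]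
  obtain ⟨n₀, hn₀⟩ :=
    Metric.cauchySeq_iff'.1 (hsub _ (enum_strictMono hW)) (ε / 8) (by positivity)
  obtain ⟨⟨T₁, hT₁n, hT₁W, hT₁⟩, ⟨T₂, hT₂n, hT₂W, hT₂⟩⟩ := hfreq (n₀ + 1)
  have hT₁pos : (0 : ℝ) < T₁.card := by exact_mod_cast (show 0 < T₁.card by omega)
  have hT₂pos : (0 : ℝ) < T₂.card := by exact_mod_cast (show 0 < T₂.card by omega)
  have h₁ : ‖cesaroMean (y ∘ enum W) T₁.card - l‖ ≤ ε / 8 := by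
    rw [hmean T₁ hT₁W (Finset.card_pos.1 (by omega)), div_le_iff₀ hT₁pos]
    linarith
  have h₂ : ε / 2 ≤ ‖cesaroMean (y ∘ enum W) T₂.card - l‖ := by
    rw [hmean T₂ hT₂W (Finset.card_pos.1 (by omega)), le_div_iff₀ hT₂pos]
    linarith
  have d₁ := hn₀ T₁.card (by omega)
  have d₂ := hn₀ T₂.card (by omega)
  have := dist_triangle4 (cesaroMean (y ∘ enum W) T₂.card) (cesaroMean (y ∘ enum W) n₀)
    (cesaroMean (y ∘ enum W) T₁.card) l
  rw [dist_comm (cesaroMean (y ∘ enum W) n₀), dist_eq_norm _ l, dist_eq_norm _ l] at this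
  linarith

end CesaroMeans

section ErdosMagidor

variable {X : Type*} [NormedAddCommGroup X] [NormedSpace ℝ X]

lemma cauchySeq_iff_forall_dist_add_le {α : Type*} [PseudoMetricSpace α] {u : ℕ → α} :
    CauchySeq u ↔ ∀ k : ℕ, ∃ n, ∀ m, dist (u (n + m)) (u n) ≤ ((k : ℝ) + 1)⁻¹ := by
  rw [Metric.cauchySeq_iff']
  constructor
  · intro h k
    obtain ⟨n, hn⟩ := h _ (by positivity : (0 : ℝ) < ((k : ℝ) + 1)⁻¹)
    exact ⟨n, fun m => (hn (n + m) (Nat.le_add_right n m)).le⟩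
  · intro h ε hε
    obtain ⟨k, hk⟩ := exists_nat_one_div_lt hε
    obtain ⟨n, hn⟩ := h k
    refine ⟨n, fun m hm => ?_⟩
    obtain ⟨j, rfl⟩ := Nat.exists_eq_add_of_le hm
    exact (hn j).trans_lt (by simpa using hk)

lemma cesaroMean_comp_enum_eq_of_firstSeg_eq (x : ℕ → X) {A B : Set ℕ} (hA : A.Infinite)
    (hB : B.Infinite) {m n : ℕ} (h : firstSeg A m = firstSeg B m) (hnm : n ≤ m) :
    cesaroMean (x ∘ enum A) n = cesaroMean (x ∘ enum B) n := by
  refine congrArg _ (Finset.sum_congr rfl fun k hk => ?_)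
  rw [Function.comp_apply, Function.comp_apply,
    enum_eq_of_firstSeg_eq hA hB h ((Finset.mem_range.1 hk).trans_le hnm)]

lemma hasBaireProperty_setOf_cauchySeq_cesaroMean (x : ℕ → X) :
    HasBaireProperty {A | A.Infinite ∧ CauchySeq (cesaroMean (x ∘ enum A))} := by
  have hset : {A | A.Infinite ∧ CauchySeq (cesaroMean (x ∘ enum A))} = ⋂ k : ℕ, ⋃ n, ⋂ m,
      {A | A.Infinite ∧ dist (cesaroMean (x ∘ enum A) (n + m)) (cesaroMean (x ∘ enum A) n) ≤
        ((k : ℝ) + 1)⁻¹} := by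
    ext A
    simp only [Set.mem_ofPred_eq, Set.mem_iInter, Set.mem_iUnion, cauchySeq_iff_forall_dist_add_le]
    constructor
    · rintro ⟨hA, h⟩ k
      exact (h k).imp fun n hn m => ⟨hA, hn m⟩
    · intro h
      obtain ⟨n, hn⟩ := h 0
      exact ⟨(hn 0).1, fun k => (h k).imp fun n hn m => (hn m).2⟩
  rw [hset]
  refine .iInter fun k => .iUnion fun n => .iInter fun m =>
    (isEllentuckOpen_setOf_firstSeg (n + m) fun A B hA hB h hAq => ?_).hasBaireProperty
  rwa [← cesaroMean_comp_enum_eq_of_firstSeg_eq x hA hB h le_rfl,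
    ← cesaroMean_comp_enum_eq_of_firstSeg_eq x hA hB h (Nat.le_add_right n m)]

/-- The Erdős–Magidor dichotomy. -/
theorem exists_strictMono_forall_cauchySeq_or_forall_not_cauchySeq (x : ℕ → X) :
    ∃ ψ : ℕ → ℕ, StrictMono ψ ∧
      ((∀ φ : ℕ → ℕ, StrictMono φ → CauchySeq (cesaroMean (x ∘ ψ ∘ φ))) ∨
        ∀ φ : ℕ → ℕ, StrictMono φ → ¬CauchySeq (cesaroMean (x ∘ ψ ∘ φ))) := by
  obtain ⟨N, -, hN, h⟩ := (hasBaireProperty_setOf_cauchySeq_cesaroMean x).isCompletelyRamsey ∅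
    Set.univ Set.infinite_univ
  have hsub : ∀ φ : ℕ → ℕ, StrictMono φ →
      Set.range (enum N ∘ φ) ∈ basicOpen ∅ N ∧ enum (Set.range (enum N ∘ φ)) = enum N ∘ φ :=
    fun φ hφ => ⟨⟨Set.infinite_range_of_injective ((enum_strictMono hN).comp hφ).injective,
      isInitSeg_empty _, by simpa [Set.range_subset_iff] using fun k => enum_mem hN (φ k)⟩,
      enum_range ((enum_strictMono hN).comp hφ)⟩
  refine ⟨enum N, enum_strictMono hN, h.imp (fun h φ hφ => ?_) (fun h φ hφ hcauchy => ?_)⟩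
  · have := (h (hsub φ hφ).1).2
    rwa [(hsub φ hφ).2] at this
  · refine Set.disjoint_left.1 h (hsub φ hφ).1 ⟨(hsub φ hφ).1.1, ?_⟩
    rwa [(hsub φ hφ).2]

end ErdosMagidor

theorem statement5_general {X : Type*} [NormedAddCommGroup X] [NormedSpace ℝ X]
    (A : Set X) (hA : Bornology.IsBounded A) :
    (∀ x : ℕ → X, (∀ n, x n ∈ A) →
        ∃ φ : ℕ → ℕ, StrictMono φ ∧ ∃ l : X, CesaroConvergent (x ∘ φ) l) ↔
      (∀ x : ℕ → X, (∀ n, x n ∈ A) →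
        ∃ φ : ℕ → ℕ, StrictMono φ ∧ ∃ l : X, UnifWeaklyConvergent (x ∘ φ) l) := by
  obtain ⟨C, hC⟩ := isBounded_iff_forall_norm_le.1 hA
  have hbound : ∀ z : ℕ → X, (∀ n, z n ∈ A) → ∀ l n, ‖z n - l‖ ≤ C + ‖l‖ :=
    fun z hz l n => (norm_sub_le _ _).trans (by linarith [hC _ (hz n)])
  constructor
  · intro hBS x hx
    obtain ⟨ψ, hψ, hall | hnone⟩ := exists_strictMono_forall_cauchySeq_or_forall_not_cauchySeq x
    all_goals obtain ⟨φ, hφ, l, hl⟩ := hBS (x ∘ ψ) fun n => hx (ψ n)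
    · exact ⟨ψ ∘ φ, hψ.comp hφ, l, unifWeaklyConvergent_of_forall_cauchySeq
        (hbound _ (fun n => hx _) l) hl fun χ hχ => hall (φ ∘ χ) (hφ.comp hχ)⟩
    · exact (hnone φ hφ hl.cauchySeq).elim
  · intro hUW x hx
    obtain ⟨φ, hφ, l, hl⟩ := hUW x hx
    exact ⟨φ, hφ, l, hl.cesaroConvergent (hbound _ (fun n => hx _) l)⟩

/-- A bounded subset `A` of a real Banach space `X` is a Banach–Saks set (every
sequence in `A` has a Cesàro convergent subsequence) if and only if every sequence in `A` has a
subsequence converging uniformly weakly to some point of `X`. -/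
theorem statement5 {X : Type*} [NormedAddCommGroup X] [NormedSpace ℝ X] [CompleteSpace X]
    (A : Set X) (hA : Bornology.IsBounded A) :
    (∀ x : ℕ → X, (∀ n, x n ∈ A) →
        ∃ φ : ℕ → ℕ, StrictMono φ ∧ ∃ l : X, CesaroConvergent (x ∘ φ) l) ↔
      (∀ x : ℕ → X, (∀ n, x n ∈ A) →
        ∃ φ : ℕ → ℕ, StrictMono φ ∧ ∃ l : X, UnifWeaklyConvergent (x ∘ φ) l) :=
  statement5_general A hA
end

section
/- Let X be a real Banach space and A ⊆ X a bounded subset. Then Γ₂(A) ≤ Γ₃(A), where Γ₂(A) is the infimum of the ε > 0 for which there exists N ∈ ℕ such that there are no finite sequences x₁,…,xₙ ∈ A and x*₁,…,x*ₙ ∈ B_{X*} with n ≥ N, x*_k(x_j) = 0 for j < k and x*_k(x_j) > ε for j ≥ k, and Γ₃(A) is the supremum (with sup ∅ = 0) of the ε > 0 such that for every n ∈ ℕ there exist x₁,…,xₙ ∈ A with dist(conv{x₁,…,x_k}, conv{x_{k+1},…,xₙ}) ≥ ε for all k = 1,…,n−1. -/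
variable {X : Type*} [NormedAddCommGroup X] [NormedSpace ℝ X]

/-- `Γ₂(A)`: the infimum of the `ε > 0` for which there is `N ∈ ℕ` such that there are no finite
sequences `x₁,…,xₙ ∈ A`, `x*₁,…,x*ₙ ∈ B_{X*}` with `n ≥ N`, `x*_k(x_j) = 0` for `j < k` and
`x*_k(x_j) > ε` for `j ≥ k`. -/
noncomputable def Gamma2 (A : Set X) : ℝ :=
  sInf {ε : ℝ | 0 < ε ∧ ∃ N : ℕ, ∀ n : ℕ, N ≤ n →
    ¬ ∃ (x : Fin n → X) (f : Fin n → X →L[ℝ] ℝ),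
      (∀ i, x i ∈ A) ∧ (∀ i, ‖f i‖ ≤ 1) ∧
      (∀ j k : Fin n, j < k → f k (x j) = 0) ∧
      (∀ j k : Fin n, k ≤ j → ε < f k (x j))}

/-- `Γ₃(A)`: the supremum (`sSup ∅ = 0` by convention in `ℝ`) of the `ε > 0` such that for every
`n` there are `x₁,…,xₙ ∈ A` with `dist(conv{x₁,…,x_k}, conv{x_{k+1},…,xₙ}) ≥ ε` for all
`k = 1,…,n-1`. -/
noncomputable def Gamma3 (A : Set X) : ℝ :=
  sSup {ε : ℝ | 0 < ε ∧ ∀ n : ℕ, ∃ x : Fin n → X, (∀ i, x i ∈ A) ∧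
    ∀ k : ℕ, 1 ≤ k → k ≤ n - 1 →
      ∀ a ∈ convexHull ℝ (x '' {i | (i : ℕ) < k}),
        ∀ b ∈ convexHull ℝ (x '' {i | k ≤ (i : ℕ)}), ε ≤ dist a b}

/-- For a bounded subset `A` of a real Banach space `X`, `Γ₂(A) ≤ Γ₃(A)`. -/
theorem statement7 [CompleteSpace X] (A : Set X) (hA : Bornology.IsBounded A) :
    Gamma2 A ≤ Gamma3 A := by
  obtain ⟨r, hr⟩ := hA.subset_closedBall 0
  have hnorm : ∀ x ∈ A, ‖x‖ ≤ r := fun x hx => by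
    simpa [mem_closedBall_zero_iff] using hr hx
  set S3 := {ε : ℝ | 0 < ε ∧ ∀ n : ℕ, ∃ x : Fin n → X, (∀ i, x i ∈ A) ∧
    ∀ k : ℕ, 1 ≤ k → k ≤ n - 1 →
      ∀ a ∈ convexHull ℝ (x '' {i | (i : ℕ) < k}),
        ∀ b ∈ convexHull ℝ (x '' {i | k ≤ (i : ℕ)}), ε ≤ dist a b} with hS3
  have hbdd : BddAbove S3 := by
    refine ⟨r + r, fun ε hε => ?_⟩
    obtain ⟨x, hxA, hsep⟩ := hε.2 2
    have h0 : x 0 ∈ convexHull ℝ (x '' {i : Fin 2 | (i : ℕ) < 1}) :=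
      subset_convexHull ℝ _ ⟨0, by simp, rfl⟩
    have h1 : x 1 ∈ convexHull ℝ (x '' {i : Fin 2 | 1 ≤ (i : ℕ)}) :=
      subset_convexHull ℝ _ ⟨1, by simp, rfl⟩
    have := hsep 1 le_rfl (by norm_num) (x 0) h0 (x 1) h1
    calc ε ≤ dist (x 0) (x 1) := this
      _ ≤ ‖x 0‖ + ‖x 1‖ := by rw [dist_eq_norm]; exact norm_sub_le _ _
      _ ≤ r + r := add_le_add (hnorm _ (hxA 0)) (hnorm _ (hxA 1))
  have h3nonneg : 0 ≤ Gamma3 A := by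
    unfold Gamma3; exact Real.sSup_nonneg fun x hx => hx.1.le
  by_contra hcon
  push_neg at hcon
  set ε := (Gamma3 A + Gamma2 A) / 2 with hεdef
  have hε3 : Gamma3 A < ε := by rw [hεdef]; linarith
  have hε2 : ε < Gamma2 A := by rw [hεdef]; linarith
  have hεpos : 0 < ε := lt_of_le_of_lt h3nonneg hε3
  -- ε ∉ S3 since ε > sSup S3
  have hεS3 : ε ∉ S3 := fun h => absurd (le_csSup hbdd h) (not_le.mpr hε3)
  -- so the ∀ n condition fails, which means ε is in the Gamma2 set
  have hmem : ε ∈ {δ : ℝ | 0 < δ ∧ ∃ N : ℕ, ∀ n : ℕ, N ≤ n →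
      ¬ ∃ (x : Fin n → X) (f : Fin n → X →L[ℝ] ℝ),
        (∀ i, x i ∈ A) ∧ (∀ i, ‖f i‖ ≤ 1) ∧
        (∀ j k : Fin n, j < k → f k (x j) = 0) ∧
        (∀ j k : Fin n, k ≤ j → δ < f k (x j))} := by
    refine ⟨hεpos, ?_⟩
    by_contra hno
    push_neg at hno
    apply hεS3
    refine ⟨hεpos, fun m => ?_⟩
    obtain ⟨n, hmn, x, f, hxA, hf1, hf0, hfε⟩ := hno m
    refine ⟨fun i => x ⟨i, lt_of_lt_of_le i.2 hmn⟩, fun i => hxA _, ?_⟩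
    intro k hk1 hkm a ha b hb
    have hkn : k < n := lt_of_lt_of_le (by omega) hmn
    set K : Fin n := ⟨k, hkn⟩ with hK
    have hga : f K a = 0 := by
      have hsub : (fun i : Fin m => x ⟨i, lt_of_lt_of_le i.2 hmn⟩) ''
          {i | (i : ℕ) < k} ⊆ (f K) ⁻¹' {0} := by
        rintro _ ⟨i, hi, rfl⟩
        exact hf0 ⟨i, lt_of_lt_of_le i.2 hmn⟩ K hi
      have hconv : Convex ℝ ((f K) ⁻¹' ({0} : Set ℝ)) :=
        (convex_singleton 0).linear_preimage (f K : X →ₗ[ℝ] ℝ)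
      exact convexHull_min hsub hconv ha
    have hgb : ε < f K b := by
      have hsub : (fun i : Fin m => x ⟨i, lt_of_lt_of_le i.2 hmn⟩) ''
          {i | k ≤ (i : ℕ)} ⊆ (f K) ⁻¹' (Set.Ioi ε) := by
        rintro _ ⟨i, hi, rfl⟩
        exact hfε ⟨i, lt_of_lt_of_le i.2 hmn⟩ K hi
      have hconv : Convex ℝ ((f K) ⁻¹' (Set.Ioi ε)) :=
        (convex_Ioi ε).linear_preimage (f K : X →ₗ[ℝ] ℝ)
      exact convexHull_min hsub hconv hb
    have : ε < dist a b := by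
      calc ε < f K b := hgb
        _ = f K (b - a) := by rw [map_sub, hga, sub_zero]
        _ ≤ ‖f K (b - a)‖ := le_abs_self _
        _ ≤ ‖f K‖ * ‖b - a‖ := (f K).le_opNorm _
        _ ≤ 1 * ‖b - a‖ := mul_le_mul_of_nonneg_right (hf1 K) (norm_nonneg _)
        _ = dist a b := by rw [one_mul, dist_eq_norm, norm_sub_rev]
    exact this.le
  have hbddBelow : BddBelow {δ : ℝ | 0 < δ ∧ ∃ N : ℕ, ∀ n : ℕ, N ≤ n →
      ¬ ∃ (x : Fin n → X) (f : Fin n → X →L[ℝ] ℝ),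
        (∀ i, x i ∈ A) ∧ (∀ i, ‖f i‖ ≤ 1) ∧
        (∀ j k : Fin n, j < k → f k (x j) = 0) ∧
        (∀ j k : Fin n, k ≤ j → δ < f k (x j))} := ⟨0, fun δ hδ => hδ.1.le⟩
  have : Gamma2 A ≤ ε := csInf_le hbddBelow hmem
  linarith
end

section
/- Let X be a real Banach space, (e_i)_{i∈I} a bounded family in X, and c_s ≥ 1 a constant such that for every n ∈ ℕ, every pair of n-tuples of pairwise distinct indices i₁,…,iₙ ∈ I and j₁,…,jₙ ∈ I, and all scalars λ₁,…,λₙ ∈ ℝ, one has ‖Σ_{k=1}^{n} λ_k e_{j_k}‖ ≤ c_s · ‖Σ_{k=1}^{n} λ_k e_{i_k}‖. If 0 is a cluster point of the family (e_i)_{i∈I} in the weak topology of X (i.e., every weak neighborhood of 0 contains e_i for infinitely many i ∈ I), then the family (e_i)_{i∈I} is uniformly weakly null: for every ε > 0 there exists N ∈ ℕ such that for every x* in the closed unit ball B_{X*} of X*, the set {i ∈ I : |x*(e_i)| > ε} has at most N elements. -/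
/-!
By Mazur's theorem, `0` lies in the norm closure of the convex hull of the `e i`. If the family
were not uniformly weakly null at level `ε`, then for every `M` some functional of norm at most
one exceeds `ε` in absolute value, hence (up to sign) exceeds `ε`, at `2M + 1` of the `e i`; by
symmetry every sum of `M` distinct `e i` then has norm at least `M ε / c`. A convex combination of
`M` distinct `e i` has norm at least `1 / (M c)` times that of their plain sum, so every point of
the convex hull has norm at least `ε / c²`, and so has every point of its closure, `0` included.
-/

open Finset Set

section

variable {X : Type*} [NormedAddCommGroup X] [NormedSpace ℝ X] {I : Type*}

theorem mem_closure_convexHull_of_toWeakSpace_mem_closure {s : Set X} {x : X}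
    (hx : toWeakSpace ℝ X x ∈ closure (toWeakSpace ℝ X '' s)) :
    x ∈ closure (convexHull ℝ s) := by
  have hx' : toWeakSpace ℝ X x ∈ closure (toWeakSpace ℝ X '' convexHull ℝ s) :=
    closure_mono (image_mono (subset_convexHull ℝ s)) hx
  rw [← (convex_convexHull ℝ s).toWeakSpace_closure ℝ] at hx'
  obtain ⟨y, hy, hyx⟩ := hx'
  rwa [← (toWeakSpace ℝ X).injective hyx]

theorem Finset.card_mul_le_norm_sum_of_lt_apply {ι : Type*} {f : X →L[ℝ] ℝ} (hf : ‖f‖ ≤ 1)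
    {s : Finset ι} {v : ι → X} {ε : ℝ} (hv : ∀ i ∈ s, ε < f (v i)) :
    #s * ε ≤ ‖∑ i ∈ s, v i‖ :=
  calc #s * ε = ∑ _i ∈ s, ε := by rw [sum_const, nsmul_eq_mul]
    _ ≤ ∑ i ∈ s, f (v i) := sum_le_sum fun i hi => (hv i hi).le
    _ = f (∑ i ∈ s, v i) := (map_sum f v s).symm
    _ ≤ ‖f (∑ i ∈ s, v i)‖ := le_abs_self _
    _ ≤ ‖∑ i ∈ s, v i‖ := by simpa using f.le_of_opNorm_le hf (∑ i ∈ s, v i)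

theorem encard_setOf_lt_abs_le {ι : Type*} (u : ι → ℝ) (ε : ℝ) :
    {i | ε < |u i|}.encard ≤ {i | ε < u i}.encard + {i | ε < -u i}.encard := by
  have hsplit : {i | ε < |u i|} = {i | ε < u i} ∪ {i | ε < -u i} := by
    ext i
    simp only [mem_ofPred_eq, mem_union, lt_abs]
  rw [hsplit]
  exact encard_union_le _ _

theorem Finset.sum_eq_sum_equivFin_symm {ι M : Type*} [AddCommMonoid M] (s : Finset ι)
    (f : ι → M) : ∑ i ∈ s, f i = ∑ k, f (s.equivFin.symm k) := by
  rw [← s.sum_coe_sort f, ← s.equivFin.symm.sum_comp]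

def IsSymmetricWith (e : I → X) (c : ℝ) : Prop :=
  ∀ (n : ℕ) (i j : Fin n → I), Function.Injective i → Function.Injective j →
    ∀ lam : Fin n → ℝ, ‖∑ k, lam k • e (j k)‖ ≤ c * ‖∑ k, lam k • e (i k)‖

namespace IsSymmetricWith

variable {e : I → X} {c : ℝ}

theorem norm_sum_le_of_card_eq (h : IsSymmetricWith e c) {s t : Finset I} (hst : #s = #t) :
    ‖∑ i ∈ t, e i‖ ≤ c * ‖∑ i ∈ s, e i‖ := by
  have hi : Function.Injective fun k => (s.equivFin.symm k : I) :=
    Subtype.val_injective.comp s.equivFin.symm.injective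
  have hj : Function.Injective fun k => (t.equivFin.symm (Fin.cast hst k) : I) :=
    Subtype.val_injective.comp (t.equivFin.symm.injective.comp (Fin.cast_injective hst))
  have := h _ _ _ hi hj 1
  simp only [Pi.one_apply, one_smul] at this
  rw [s.sum_eq_sum_equivFin_symm, t.sum_eq_sum_equivFin_symm,
    ← (finCongr hst).sum_comp]
  exact this

-- Averaging the `M` cyclic shifts `t (· + r)` of the weights gives back the unweighted sum,
-- and by symmetry each shifted combination has norm at most `c` times the original one.
theorem norm_sum_le_card_mul_norm_sum_smul_fin (h : IsSymmetricWith e c) {M : ℕ}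
    {j : Fin M → I} (hj : Function.Injective j) {t : Fin M → ℝ} (ht : ∑ k, t k = 1) :
    ‖∑ m, e (j m)‖ ≤ M * c * ‖∑ m, t m • e (j m)‖ := by
  have : NeZero M := ⟨by rintro rfl; simp at ht⟩
  have hshift : ∀ r : Fin M, ‖∑ m, t (m + r) • e (j m)‖ ≤ c * ‖∑ m, t m • e (j m)‖ := by
    intro r
    have hperm : ∑ m, t (m + r) • e (j m) = ∑ k, t k • e (j (k - r)) := by
      rw [← Equiv.sum_comp (Equiv.addRight r) fun k => t k • e (j (k - r))]
      simp
    rw [hperm]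
    exact h M j (fun k => j (k - r)) hj (hj.comp (Equiv.subRight r).injective) t
  have hsum : ∑ m, e (j m) = ∑ r : Fin M, ∑ m, t (m + r) • e (j m) := by
    rw [Finset.sum_comm]
    refine Finset.sum_congr rfl fun m _ => ?_
    have hm : ∑ r, t (m + r) = 1 := (Equiv.sum_comp (Equiv.addLeft m) t).trans ht
    rw [← Finset.sum_smul, hm, one_smul]
  calc ‖∑ m, e (j m)‖ ≤ ∑ r : Fin M, ‖∑ m, t (m + r) • e (j m)‖ := hsum ▸ norm_sum_le _ _
    _ ≤ ∑ _r : Fin M, c * ‖∑ m, t m • e (j m)‖ := sum_le_sum fun r _ => hshift r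
    _ = M * c * ‖∑ m, t m • e (j m)‖ := by simp [mul_assoc]

theorem norm_sum_le_card_mul_norm_sum_smul (h : IsSymmetricWith e c) (s : Finset I)
    {w : I → ℝ} (hw : ∑ i ∈ s, w i = 1) :
    ‖∑ i ∈ s, e i‖ ≤ #s * c * ‖∑ i ∈ s, w i • e i‖ := by
  rw [s.sum_eq_sum_equivFin_symm] at hw ⊢
  rw [s.sum_eq_sum_equivFin_symm (fun i => w i • e i)]
  exact h.norm_sum_le_card_mul_norm_sum_smul_fin
    (Subtype.val_injective.comp s.equivFin.symm.injective) hw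

theorem card_mul_le_norm_sum (h : IsSymmetricWith e c) {ε : ℝ} {f : X →L[ℝ] ℝ} (hf : ‖f‖ ≤ 1)
    {s : Finset I} (hs : 2 * #s < {i | ε < |f (e i)|}.encard) :
    #s * ε ≤ c * ‖∑ i ∈ s, e i‖ := by
  obtain ⟨g, hg, hgs⟩ : ∃ g : X →L[ℝ] ℝ, ‖g‖ ≤ 1 ∧ (#s : ℕ∞) ≤ {i | ε < g (e i)}.encard := by
    by_contra! hsmall
    have hle := encard_setOf_lt_abs_le (fun i => f (e i)) ε
    have := add_le_add (hsmall f hf).le (hsmall (-f) (by rwa [norm_neg])).le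
    simp only [neg_apply] at this
    exact hs.not_ge (by rw [two_mul]; exact hle.trans this)
  obtain ⟨t, hts, htcard⟩ := exists_subset_encard_eq hgs
  obtain ⟨t, rfl⟩ := (finite_of_encard_eq_coe htcard).exists_finset_coe
  have hcard : #t = #s := by simpa using htcard
  calc #s * ε = #t * ε := by rw [hcard]
    _ ≤ ‖∑ i ∈ t, e i‖ := card_mul_le_norm_sum_of_lt_apply hg fun i hi => hts hi
    _ ≤ c * ‖∑ i ∈ s, e i‖ := h.norm_sum_le_of_card_eq hcard.symm

theorem le_norm_of_mem_convexHull (h : IsSymmetricWith e c) (hc : 0 ≤ c) {ε : ℝ}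
    (hlower : ∀ s : Finset I, #s * ε ≤ c * ‖∑ i ∈ s, e i‖) {x : X}
    (hx : x ∈ convexHull ℝ (range e)) : ε ≤ c ^ 2 * ‖x‖ := by
  rw [convexHull_range_eq_exists_affineCombination] at hx
  obtain ⟨s, w, -, hw, rfl⟩ := hx
  rw [s.affineCombination_eq_linear_combination e w hw]
  have hs : (0 : ℝ) < #s := by
    rcases s.eq_empty_or_nonempty with rfl | hne
    · simp at hw
    · exact_mod_cast hne.card_pos
  have := (hlower s).trans
    (mul_le_mul_of_nonneg_left (h.norm_sum_le_card_mul_norm_sum_smul s hw) hc)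
  nlinarith

end IsSymmetricWith

end

theorem statement13_general {X : Type*} [NormedAddCommGroup X] [NormedSpace ℝ X]
    {I : Type*} (e : I → X)
    (cs : ℝ) (hcs : 1 ≤ cs)
    (hsymm : ∀ (n : ℕ) (i j : Fin n → I), Function.Injective i → Function.Injective j →
      ∀ lam : Fin n → ℝ, ‖∑ k, lam k • e (j k)‖ ≤ cs * ‖∑ k, lam k • e (i k)‖)
    (hcluster : ∀ U ∈ nhds (toWeakSpace ℝ X 0), {i : I | toWeakSpace ℝ X (e i) ∈ U}.Infinite) :
    ∀ ε : ℝ, 0 < ε → ∃ N : ℕ, ∀ f : X →L[ℝ] ℝ, ‖f‖ ≤ 1 →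
      {i : I | ε < |f (e i)|}.encard ≤ (N : ℕ∞) := by
  intro ε hε
  by_contra! hcon
  have hsymm : IsSymmetricWith e cs := hsymm
  have hcs₀ : 0 ≤ cs := zero_le_one.trans hcs
  have hlower (s : Finset I) : #s * ε ≤ cs * ‖∑ i ∈ s, e i‖ := by
    obtain ⟨f, hf, hfs⟩ := hcon (2 * #s)
    exact hsymm.card_mul_le_norm_sum hf (by exact_mod_cast hfs)
  have hweak : toWeakSpace ℝ X 0 ∈ closure (toWeakSpace ℝ X '' range e) :=
    mem_closure_iff_nhds.mpr fun U hU =>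
      let ⟨i, hi⟩ := (hcluster U hU).nonempty
      ⟨_, hi, mem_image_of_mem _ (mem_range_self i)⟩
  have hzero : ε ≤ cs ^ 2 * ‖(0 : X)‖ :=
    closure_minimal (t := {x : X | ε ≤ cs ^ 2 * ‖x‖})
      (fun _ hx => hsymm.le_norm_of_mem_convexHull hcs₀ hlower hx)
      (isClosed_le continuous_const (by fun_prop))
      (mem_closure_convexHull_of_toWeakSpace_mem_closure hweak)
  simp only [norm_zero, mul_zero] at hzero
  exact hε.not_ge hzero

/-- Let `(e_i)_{i ∈ I}` be a bounded family in a real Banach space `X` which is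
symmetric with constant `c_s ≥ 1` (any rearrangement over distinct indices changes norms of
linear combinations by a factor at most `c_s`). If `0` is a cluster point of the family in the
weak topology (every weak neighbourhood of `0` contains `e_i` for infinitely many `i`), then the
family is uniformly weakly null. -/
theorem statement13 {X : Type*} [NormedAddCommGroup X] [NormedSpace ℝ X] [CompleteSpace X]
    {I : Type*} (e : I → X) (hbdd : Bornology.IsBounded (Set.range e))
    (cs : ℝ) (hcs : 1 ≤ cs)
    (hsymm : ∀ (n : ℕ) (i j : Fin n → I), Function.Injective i → Function.Injective j →
      ∀ lam : Fin n → ℝ, ‖∑ k, lam k • e (j k)‖ ≤ cs * ‖∑ k, lam k • e (i k)‖)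
    (hcluster : ∀ U ∈ nhds (toWeakSpace ℝ X 0), {i : I | toWeakSpace ℝ X (e i) ∈ U}.Infinite) :
    ∀ ε : ℝ, 0 < ε → ∃ N : ℕ, ∀ f : X →L[ℝ] ℝ, ‖f‖ ≤ 1 →
      {i : I | ε < |f (e i)|}.encard ≤ (N : ℕ∞) :=
  statement13_general e cs hcs hsymm hcluster
end

section
/- Let X be a real Banach space having type p for some p ∈ (1, 2] with type constant c_τ > 0, meaning that for every finite sequence x₁,…,xₙ ∈ X the average over all sign choices (ε₁,…,εₙ) ∈ {−1,1}ⁿ of ‖Σ_{k=1}^{n} ε_k x_k‖ is at most c_τ · (Σ_{k=1}^{n} ‖x_k‖^p)^{1/p}. Let (eₙ)_{n∈ℕ} be a seminormalized sequence in X (there are 0 < a ≤ b with a ≤ ‖eₙ‖ ≤ b for all n) which is unconditional with constant c_u ≥ 1, i.e., ‖Σ_{n∈F} εₙ aₙ eₙ‖ ≤ c_u · ‖Σ_{n∈F} aₙ eₙ‖ for every finite F ⊆ ℕ, all scalars aₙ ∈ ℝ and all signs εₙ ∈ {−1,1}. Then the family (eₙ)_{n∈ℕ} is uniformly weakly null: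 for every ε > 0 there exists N ∈ ℕ such that for every x* in the closed unit ball B_{X*} of X*, the set {n ∈ ℕ : |x*(eₙ)| > ε} has at most N elements. -/
/-- In a real Banach space `X` of type `p ∈ (1,2]` with type constant `c_τ > 0`,
every seminormalized unconditional sequence `(eₙ)` (with unconditionality constant `c_u ≥ 1`) is
uniformly weakly null. -/
theorem statement14 {X : Type*} [NormedAddCommGroup X] [NormedSpace ℝ X] [CompleteSpace X]
    (p : ℝ) (hp1 : 1 < p) (hp2 : p ≤ 2) (ctau : ℝ) (hctau : 0 < ctau)
    (hType : ∀ (n : ℕ) (x : Fin n → X),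
      ((2 : ℝ) ^ n)⁻¹ * ∑ σ : Fin n → Bool, ‖∑ k, (if σ k then (1 : ℝ) else -1) • x k‖ ≤
        ctau * (∑ k, ‖x k‖ ^ p) ^ (1 / p))
    (e : ℕ → X) (a b : ℝ) (ha : 0 < a) (hab : ∀ n, a ≤ ‖e n‖ ∧ ‖e n‖ ≤ b)
    (cu : ℝ) (hcu : 1 ≤ cu)
    (huncond : ∀ (F : Finset ℕ) (coef : ℕ → ℝ) (σ : ℕ → Bool),
      ‖∑ n ∈ F, (if σ n then (1 : ℝ) else -1) • coef n • e n‖ ≤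
        cu * ‖∑ n ∈ F, coef n • e n‖) :
    ∀ ε : ℝ, 0 < ε → ∃ N : ℕ, ∀ f : X →L[ℝ] ℝ, ‖f‖ ≤ 1 →
      {n : ℕ | ε < |f (e n)|}.encard ≤ (N : ℕ∞) := by
  have hcu0 : (0:ℝ) < cu := lt_of_lt_of_le one_pos hcu
  have hb : 0 < b := lt_of_lt_of_le ha ((hab 0).1.trans (hab 0).2)
  have hp0 : (0:ℝ) < p := lt_trans one_pos hp1
  -- Step 1: unconditionality transfer: for any signs, ‖∑ e n‖ ≤ cu * ‖∑ ± e n‖ and reverse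
  have hflip : ∀ (F : Finset ℕ) (δ : ℕ → Bool),
      ‖∑ n ∈ F, e n‖ ≤ cu * ‖∑ n ∈ F, (if δ n then (1:ℝ) else -1) • e n‖ := by
    intro F δ
    have := huncond F (fun n => if δ n then (1:ℝ) else -1) δ
    have h2 : ∑ n ∈ F, (if δ n then (1:ℝ) else -1) •
        (if δ n then (1:ℝ) else -1) • e n = ∑ n ∈ F, e n := by
      refine Finset.sum_congr rfl fun n _ => ?_
      by_cases h : δ n <;> simp [h, smul_smul]
    rwa [h2] at this
  have hflip' : ∀ (F : Finset ℕ) (δ : ℕ → Bool),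
      ‖∑ n ∈ F, (if δ n then (1:ℝ) else -1) • e n‖ ≤ cu * ‖∑ n ∈ F, e n‖ := by
    intro F δ
    have := huncond F (fun _ => (1:ℝ)) δ
    simpa using this
  -- Step 2: norm bound via type
  have hnorm : ∀ F : Finset ℕ, ‖∑ n ∈ F, e n‖ ≤ cu * ctau * b * (F.card : ℝ) ^ (1/p) := by
    intro F
    set m := F.card with hm
    set x : Fin m → X := fun k => e (F.equivFin.symm k).1 with hx
    -- each signed sum over Fin m matches a signed sum over F
    have hkey : ∀ σ : Fin m → Bool,
        ‖∑ n ∈ F, e n‖ / cu ≤ ‖∑ k, (if σ k then (1:ℝ) else -1) • x k‖ := by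
      intro σ
      set δ : ℕ → Bool := fun n => if h : n ∈ F then σ (F.equivFin ⟨n, h⟩) else true with hδ
      have hsum : ∑ k, (if σ k then (1:ℝ) else -1) • x k
          = ∑ n ∈ F, (if δ n then (1:ℝ) else -1) • e n := by
        rw [← Finset.sum_attach F (fun n => (if δ n then (1:ℝ) else -1) • e n),
          ← Finset.univ_eq_attach]
        refine Fintype.sum_equiv F.equivFin.symm _ _ fun k => ?_
        have h1 : δ (F.equivFin.symm k).1 = σ k := by
          simp only [hδ, (F.equivFin.symm k).2, dif_pos]
          congr 1
          simp
        rw [h1]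
      rw [hsum, div_le_iff₀ hcu0, mul_comm]
      exact hflip F δ
    have htype := hType m x
    have hlow : (2:ℝ) ^ m * (‖∑ n ∈ F, e n‖ / cu) ≤
        ∑ σ : Fin m → Bool, ‖∑ k, (if σ k then (1:ℝ) else -1) • x k‖ := by
      have := Finset.card_nsmul_le_sum Finset.univ
        (fun σ : Fin m → Bool => ‖∑ k, (if σ k then (1:ℝ) else -1) • x k‖)
        (‖∑ n ∈ F, e n‖ / cu) (fun σ _ => hkey σ)
      simpa [Fintype.card_fun, nsmul_eq_mul, mul_comm] using this
    have h2pos : (0:ℝ) < 2 ^ m := by positivity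
    have hstep1 : ‖∑ n ∈ F, e n‖ / cu ≤ ctau * (∑ k, ‖x k‖ ^ p) ^ (1/p) := by
      calc ‖∑ n ∈ F, e n‖ / cu
          = ((2:ℝ) ^ m)⁻¹ * ((2:ℝ) ^ m * (‖∑ n ∈ F, e n‖ / cu)) := by
            field_simp
        _ ≤ ((2:ℝ) ^ m)⁻¹ * ∑ σ : Fin m → Bool, ‖∑ k, (if σ k then (1:ℝ) else -1) • x k‖ := by
            apply mul_le_mul_of_nonneg_left hlow (by positivity)
        _ ≤ ctau * (∑ k, ‖x k‖ ^ p) ^ (1/p) := htype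
    have hsb : ∑ k, ‖x k‖ ^ p ≤ (m:ℝ) * b ^ p := by
      calc ∑ k : Fin m, ‖x k‖ ^ p ≤ ∑ _k : Fin m, b ^ p := by
            refine Finset.sum_le_sum fun k _ => ?_
            exact Real.rpow_le_rpow (norm_nonneg _) (hab _).2 (le_of_lt hp0)
        _ = (m:ℝ) * b ^ p := by simp [mul_comm]
    have hrb : ((m:ℝ) * b ^ p) ^ (1/p) = (m:ℝ) ^ (1/p) * b := by
      rw [Real.mul_rpow (by positivity) (by positivity), ← Real.rpow_mul hb.le,
        mul_one_div, div_self (ne_of_gt hp0), Real.rpow_one]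
    have : ‖∑ n ∈ F, e n‖ / cu ≤ ctau * ((m:ℝ) ^ (1/p) * b) := by
      rw [← hrb]
      refine hstep1.trans ?_
      exact mul_le_mul_of_nonneg_left
        (Real.rpow_le_rpow (by positivity) hsb (by positivity)) hctau.le
    rw [div_le_iff₀ hcu0] at this
    calc ‖∑ n ∈ F, e n‖ ≤ ctau * ((m:ℝ) ^ (1/p) * b) * cu := this
      _ = cu * ctau * b * (m:ℝ) ^ (1/p) := by ring
  -- Main argument
  intro ε hε
  set C : ℝ := cu * cu * ctau * b with hC
  have hCpos : 0 < C := by positivity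
  refine ⟨⌈(C / ε) ^ (p / (p - 1))⌉₊, fun f hf => ?_⟩
  set N := ⌈(C / ε) ^ (p / (p - 1))⌉₊ with hN
  by_contra hcon
  push_neg at hcon
  obtain ⟨t, hts, htc⟩ := Set.exists_subset_encard_eq (Order.add_one_le_of_lt hcon)
  have htfin : t.Finite := Set.finite_of_encard_eq_coe (by exact_mod_cast htc)
  set F : Finset ℕ := htfin.toFinset with hF
  have hcard : F.card = N + 1 := by
    have := htfin.encard_eq_coe_toFinset_card
    rw [htc] at this
    exact_mod_cast this.symm
  set m : ℕ := N + 1 with hmdef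
  have hmem : ∀ n ∈ F, ε < |f (e n)| := by
    intro n hn
    have : n ∈ t := htfin.mem_toFinset.mp hn
    exact hts this
  -- choose signs
  set δ : ℕ → Bool := fun n => decide (0 ≤ f (e n)) with hδ
  have hfval : (m:ℝ) * ε < f (∑ n ∈ F, (if δ n then (1:ℝ) else -1) • e n) := by
    rw [map_sum]
    have h1 : ∀ n ∈ F, (if δ n then (1:ℝ) else -1) • f (e n) = |f (e n)| := by
      intro n _
      by_cases h : 0 ≤ f (e n)
      · simp [hδ, h, abs_of_nonneg h]
      · simp [hδ, h, abs_of_neg (lt_of_not_ge h), smul_eq_mul]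
    have h2 : ∀ n ∈ F, f ((if δ n then (1:ℝ) else -1) • e n) = |f (e n)| := by
      intro n hn
      rw [map_smul]
      exact h1 n hn
    rw [Finset.sum_congr rfl h2]
    have hne : F.Nonempty := by
      rw [← Finset.card_pos, hcard]; omega
    calc (m:ℝ) * ε = ∑ _n ∈ F, ε := by rw [Finset.sum_const, hcard, nsmul_eq_mul]
      _ < ∑ n ∈ F, |f (e n)| := Finset.sum_lt_sum_of_nonempty hne hmem
  have hbound : f (∑ n ∈ F, (if δ n then (1:ℝ) else -1) • e n) ≤ C * (m:ℝ) ^ (1/p) := by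
    set y := ∑ n ∈ F, (if δ n then (1:ℝ) else -1) • e n with hy
    calc f y ≤ |f y| := le_abs_self _
      _ ≤ ‖f‖ * ‖y‖ := f.le_opNorm y
      _ ≤ 1 * ‖y‖ := mul_le_mul_of_nonneg_right hf (norm_nonneg _)
      _ = ‖y‖ := one_mul _
      _ ≤ cu * ‖∑ n ∈ F, e n‖ := hflip' F δ
      _ ≤ cu * (cu * ctau * b * (F.card : ℝ) ^ (1/p)) :=
          mul_le_mul_of_nonneg_left (hnorm F) hcu0.le
      _ = C * (m:ℝ) ^ (1/p) := by rw [hcard, hC]; push_cast; ring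
  have hmε : (m:ℝ) * ε < C * (m:ℝ) ^ (1/p) := lt_of_lt_of_le hfval hbound
  -- derive m < (C/ε)^(p/(p-1))
  have hm1 : (0:ℝ) < (m:ℝ) := by positivity
  have hr : (0:ℝ) < 1 - 1/p := by
    rw [sub_pos, div_lt_one hp0]; exact hp1
  have hsplit : (m:ℝ) = (m:ℝ) ^ (1 - 1/p) * (m:ℝ) ^ (1/p) := by
    rw [← Real.rpow_add hm1]
    norm_num
  have hpow : (m:ℝ) ^ (1 - 1/p) < C / ε := by
    rw [lt_div_iff₀ hε]
    have hq : (0:ℝ) < (m:ℝ) ^ (1/p) := Real.rpow_pos_of_pos hm1 _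
    nlinarith [hmε, hsplit]
  have hp1' : (0:ℝ) < p - 1 := by linarith
  have hexp : (1 - 1/p) * (p / (p - 1)) = 1 := by
    have h1 : p ≠ 0 := ne_of_gt hp0
    have h2 : p - 1 ≠ 0 := ne_of_gt hp1'
    field_simp
  have hmlt : (m:ℝ) < (C / ε) ^ (p / (p - 1)) := by
    have := Real.rpow_lt_rpow (Real.rpow_nonneg hm1.le _) hpow
      (show (0:ℝ) < p / (p - 1) by positivity)
    rwa [← Real.rpow_mul hm1.le, hexp, Real.rpow_one] at this
  have : (m:ℝ) ≤ (N:ℝ) := hmlt.le.trans (Nat.le_ceil _)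
  have : m ≤ N := by exact_mod_cast this
  omega
end

section
/- Let I be a set, let 𝓕 be a family of finite subsets of I, and let A = {χ_F : F ∈ 𝓕} ⊆ c₀(I), where χ_F denotes the characteristic function of F. If A is uniformly weakly null in c₀(I), then there exists a bounded linear operator T : ℓ²(A) → c₀(I) such that T(e_x) = x for every x ∈ A, where (e_x)_{x∈A} is the canonical orthonormal basis of the real Hilbert space ℓ²(A). -/
open scoped Classical

open ZeroAtInfty

/-- Let `𝓕` be a family of finite subsets of `I` (with `I` discrete) and
`A = {χ_F : F ∈ 𝓕} ⊆ c₀(I)`. If `A` is uniformly weakly null in `c₀(I)`, then there is a bounded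
linear operator `T : ℓ²(A) → c₀(I)` sending each canonical basis vector `e_x` to `x`. -/
theorem statement15 {I : Type*} [TopologicalSpace I] [DiscreteTopology I]
    (F : Set (Finset I)) (A : Set C₀(I, ℝ))
    (hA : A = {x : C₀(I, ℝ) | ∃ S ∈ F, ∀ i, x i = if i ∈ S then 1 else 0})
    (hnull : ∀ ε : ℝ, 0 < ε → ∃ N : ℕ, ∀ f : C₀(I, ℝ) →L[ℝ] ℝ, ‖f‖ ≤ 1 →
      {x ∈ A | ε < |f x|}.encard ≤ (N : ℕ∞)) :
    ∃ T : lp (fun _ : A => ℝ) 2 →L[ℝ] C₀(I, ℝ),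
      ∀ x : A, T (lp.single 2 x (1 : ℝ)) = (x : C₀(I, ℝ)) := by
  -- basic facts about elements of A
  have hval : ∀ x : A, ∀ i : I, (x : C₀(I, ℝ)) i = 0 ∨ (x : C₀(I, ℝ)) i = 1 := by
    rintro ⟨x, hx⟩ i
    rw [hA] at hx
    obtain ⟨S, -, hS⟩ := hx
    by_cases h : i ∈ S
    · right; simp [hS i, h]
    · left; simp [hS i, h]
  have habs : ∀ x : A, ∀ i : I, |(x : C₀(I, ℝ)) i| ≤ 1 := by
    intro x i
    rcases hval x i with h | h <;> simp [h]
  have hsuppfin : ∀ x : A, {i : I | (x : C₀(I, ℝ)) i ≠ 0}.Finite := by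
    rintro ⟨x, hx⟩
    rw [hA] at hx
    obtain ⟨S, -, hS⟩ := hx
    refine S.finite_toSet.subset fun i hi => ?_
    by_cases h : i ∈ S
    · exact Finset.mem_coe.mpr h
    · simp only [Set.mem_setOf_eq, hS i, if_neg h, ne_eq, not_true_eq_false] at hi
  -- get N from uniform weak nullity with ε = 1/2
  obtain ⟨N, hN⟩ := hnull (1 / 2) (by norm_num)
  -- evaluation functionals
  have hev : ∀ i : I, ∃ f : C₀(I, ℝ) →L[ℝ] ℝ, ‖f‖ ≤ 1 ∧ ∀ g : C₀(I, ℝ), f g = g i := by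
    intro i
    refine ⟨LinearMap.mkContinuous
      { toFun := fun g : C₀(I, ℝ) => g i
        map_add' := fun f g => rfl
        map_smul' := fun c f => rfl } 1 (fun g => ?_), ?_, fun g => rfl⟩
    · simpa using (g.toBCF.norm_coe_le_norm i)
    · exact LinearMap.mkContinuous_norm_le _ zero_le_one _
  -- each coordinate sees at most N elements of A
  have hfin : ∀ i : I, {x : A | (x : C₀(I, ℝ)) i ≠ 0}.Finite ∧
      {x : A | (x : C₀(I, ℝ)) i ≠ 0}.ncard ≤ N := by
    intro i
    obtain ⟨f, hf1, hf2⟩ := hev i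
    have key : {x : A | (x : C₀(I, ℝ)) i ≠ 0}.encard ≤ (N : ℕ∞) := by
      have himg : Subtype.val '' {x : A | (x : C₀(I, ℝ)) i ≠ 0} ⊆
          {x ∈ A | (1:ℝ) / 2 < |f x|} := by
        rintro y ⟨⟨x, hxA⟩, hx, rfl⟩
        refine ⟨hxA, ?_⟩
        rw [hf2]
        rcases hval ⟨x, hxA⟩ i with h | h
        · exact absurd h hx
        · rw [h]; norm_num
      calc {x : A | (x : C₀(I, ℝ)) i ≠ 0}.encard
          = (Subtype.val '' {x : A | (x : C₀(I, ℝ)) i ≠ 0}).encard :=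
            (Subtype.val_injective.encard_image _).symm
        _ ≤ {x ∈ A | (1:ℝ) / 2 < |f x|}.encard := Set.encard_le_encard himg
        _ ≤ (N : ℕ∞) := hN f hf1
    exact (Set.encard_le_coe_iff_finite_ncard_le.mp key)
  -- the finset of active elements at coordinate i
  set D : I → Finset A := fun i => (hfin i).1.toFinset with hD
  have hDcard : ∀ i, (D i).card ≤ N := by
    intro i
    rw [hD, ← Set.ncard_eq_toFinset_card _ (hfin i).1]
    exact (hfin i).2
  have hDmem : ∀ i (x : A), x ∈ D i ↔ (x : C₀(I, ℝ)) i ≠ 0 := by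
    intro i x
    simp [hD, Set.Finite.mem_toFinset]
  -- the underlying function of T a
  set φ : lp (fun _ : A => ℝ) 2 → I → ℝ :=
    fun a i => ∑ x ∈ D i, a x * (x : C₀(I, ℝ)) i with hφ
  -- pointwise bound
  have hbound : ∀ a i, |φ a i| ≤ Real.sqrt N * ‖a‖ := by
    intro a i
    have h1 : |φ a i| ≤ ∑ x ∈ D i, |a x| := by
      refine (Finset.abs_sum_le_sum_abs _ _).trans (Finset.sum_le_sum fun x _ => ?_)
      rw [abs_mul]
      calc |a x| * |(x : C₀(I, ℝ)) i| ≤ |a x| * 1 :=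
            mul_le_mul_of_nonneg_left (habs x i) (abs_nonneg _)
        _ = |a x| := mul_one _
    have h2 : (∑ x ∈ D i, |a x|) ^ 2 ≤ (D i).card * ∑ x ∈ D i, |a x| ^ 2 :=
      sq_sum_le_card_mul_sum_sq
    have h3 : ∑ x ∈ D i, |a x| ^ 2 ≤ ‖a‖ ^ 2 := by
      have h := lp.sum_rpow_le_norm_rpow (p := 2) (by norm_num) a (D i)
      have e : (2 : ENNReal).toReal = (2 : ℝ) := by norm_num
      rw [e] at h
      have conv1 : ∀ y : ℝ, ‖y‖ ^ (2 : ℝ) = |y| ^ 2 := fun y => by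
        rw [Real.norm_eq_abs, show (2:ℝ) = ((2:ℕ):ℝ) by norm_num, Real.rpow_natCast]
      have conv2 : ‖a‖ ^ (2 : ℝ) = ‖a‖ ^ 2 := by
        rw [show (2:ℝ) = ((2:ℕ):ℝ) by norm_num, Real.rpow_natCast]
      simp only [conv1, conv2] at h
      exact h
    have h4 : (∑ x ∈ D i, |a x|) ^ 2 ≤ (Real.sqrt N * ‖a‖) ^ 2 := by
      calc (∑ x ∈ D i, |a x|) ^ 2 ≤ (D i).card * ∑ x ∈ D i, |a x| ^ 2 := h2
        _ ≤ N * ‖a‖ ^ 2 := by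
            refine mul_le_mul (by exact_mod_cast hDcard i) h3
              (Finset.sum_nonneg fun x _ => sq_nonneg _) (Nat.cast_nonneg _)
        _ = (Real.sqrt N * ‖a‖) ^ 2 := by
            rw [mul_pow, Real.sq_sqrt (Nat.cast_nonneg _)]
    have hsum_nonneg : 0 ≤ ∑ x ∈ D i, |a x| := Finset.sum_nonneg fun x _ => abs_nonneg _
    calc |φ a i| ≤ ∑ x ∈ D i, |a x| := h1
      _ ≤ Real.sqrt N * ‖a‖ := by
          nlinarith [h4, hsum_nonneg, mul_nonneg (Real.sqrt_nonneg (N:ℝ)) (norm_nonneg a)]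
  -- rpow / pow conversion helper
  have conv1 : ∀ y : ℝ, ‖y‖ ^ (2 : ℝ) = |y| ^ 2 := fun y => by
    rw [Real.norm_eq_abs, show (2:ℝ) = ((2:ℕ):ℝ) by norm_num, Real.rpow_natCast]
  -- φ a vanishes at infinity
  have hzero : ∀ a : lp (fun _ : A => ℝ) 2,
      Filter.Tendsto (φ a) (Filter.cocompact I) (nhds 0) := by
    intro a
    refine Filter.Tendsto.mono_left ?_ Filter.cocompact_le_cofinite
    rw [NormedAddCommGroup.tendsto_nhds_zero]
    intro ε hε
    rw [Filter.eventually_cofinite]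
    set δ := ε / (N + 1) with hδ
    have hNpos : (0:ℝ) < (N:ℝ) + 1 := by positivity
    have hδpos : 0 < δ := by positivity
    have hS : {x : A | δ ≤ |a x|}.Finite := by
      have hsum : Summable (fun x : A => ‖a x‖ ^ (2:ℝ)) :=
        (lp.memℓp a).summable (by norm_num)
      have htend := hsum.tendsto_cofinite_zero
      have hev2 : ∀ᶠ x in Filter.cofinite, ‖a x‖ ^ (2:ℝ) < δ ^ 2 :=
        htend.eventually (gt_mem_nhds (by positivity : (0:ℝ) < δ ^ 2))
      refine (Filter.eventually_cofinite.mp hev2).subset fun x hx => ?_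
      simp only [Set.mem_setOf_eq] at hx ⊢
      rw [conv1]
      have : δ ^ 2 ≤ |a x| ^ 2 := by
        apply pow_le_pow_left₀ hδpos.le hx 2
      linarith
    have hU := hS.biUnion (fun x _ => hsuppfin x)
    refine hU.subset fun i hi => ?_
    simp only [Set.mem_setOf_eq, not_lt] at hi
    by_contra hiU
    have hsmall : ∀ x ∈ D i, |a x| ≤ δ := by
      intro x hxD
      by_contra h
      push_neg at h
      exact hiU (Set.mem_biUnion (Set.mem_setOf_eq ▸ h.le) ((hDmem i x).mp hxD))
    have hsum_le : ∑ x ∈ D i, |a x| ≤ (D i).card • δ :=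
      Finset.sum_le_card_nsmul (D i) (fun x => |a x|) δ fun x hx => hsmall x hx
    have habs_le : |φ a i| ≤ ∑ x ∈ D i, |a x| :=
      (Finset.abs_sum_le_sum_abs _ _).trans (Finset.sum_le_sum fun x _ => by
        rw [abs_mul]
        calc |a x| * |(x : C₀(I, ℝ)) i| ≤ |a x| * 1 :=
              mul_le_mul_of_nonneg_left (habs x i) (abs_nonneg _)
          _ = |a x| := mul_one _)
    have : |φ a i| ≤ (D i).card • δ := habs_le.trans hsum_le
    have hcard : ((D i).card : ℝ) * δ ≤ (N:ℝ) * δ :=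
      mul_le_mul_of_nonneg_right (by exact_mod_cast hDcard i) hδpos.le
    have hNδ : (N:ℝ) * δ < ε := by
      rw [hδ, mul_div_assoc', div_lt_iff₀ hNpos]
      nlinarith
    rw [Real.norm_eq_abs] at hi
    rw [nsmul_eq_mul] at this
    linarith
  -- linearity of φ
  have hadd : ∀ a b : lp (fun _ : A => ℝ) 2, φ (a + b) = φ a + φ b := by
    intro a b
    funext i
    simp only [hφ, Pi.add_apply, ← Finset.sum_add_distrib]
    refine Finset.sum_congr rfl fun x _ => ?_
    rw [lp.coeFn_add, Pi.add_apply, add_mul]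
  have hsmul : ∀ (c : ℝ) (a : lp (fun _ : A => ℝ) 2), φ (c • a) = c • φ a := by
    intro c a
    funext i
    simp only [hφ, Pi.smul_apply, smul_eq_mul, Finset.mul_sum]
    refine Finset.sum_congr rfl fun x _ => ?_
    rw [lp.coeFn_smul, Pi.smul_apply, smul_eq_mul, mul_assoc]
  -- the linear map
  let L : lp (fun _ : A => ℝ) 2 →ₗ[ℝ] C₀(I, ℝ) :=
    { toFun := fun a =>
        ZeroAtInftyContinuousMap.mk ⟨φ a, continuous_of_discreteTopology⟩ (hzero a)
      map_add' := fun a b => by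
        ext i
        have := congrFun (hadd a b) i
        simpa using this
      map_smul' := fun c a => by
        ext i
        have := congrFun (hsmul c a) i
        simpa using this }
  have hLapp : ∀ (a : lp (fun _ : A => ℝ) 2) (i : I), (L a) i = φ a i := fun a i => rfl
  have hLbound : ∀ a, ‖L a‖ ≤ Real.sqrt N * ‖a‖ := by
    intro a
    rw [← ZeroAtInftyContinuousMap.norm_toBCF_eq_norm]
    rw [BoundedContinuousFunction.norm_le (by positivity)]
    intro i
    rw [Real.norm_eq_abs]
    exact hbound a i
  refine ⟨L.mkContinuous (Real.sqrt N) hLbound, fun x => ?_⟩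
  rw [LinearMap.mkContinuous_apply]
  ext i
  rw [hLapp]
  have hterm : ∀ y ∈ D i,
      ((lp.single 2 x (1:ℝ) : lp (fun _ : A => ℝ) 2)) y * (y : C₀(I, ℝ)) i =
      if y = x then (x : C₀(I, ℝ)) i else 0 := by
    intro y _
    by_cases h : y = x
    · subst h
      rw [lp.single_apply_self, if_pos rfl, one_mul]
    · rw [lp.single_apply_ne 2 x 1 h, if_neg h, zero_mul]
  rw [hφ]
  simp only []
  rw [Finset.sum_congr rfl hterm,
    Finset.sum_ite_eq' (D i) x (fun _ => ((x : C₀(I, ℝ)) i))]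
  by_cases hx : x ∈ D i
  · rw [if_pos hx]
  · rw [if_neg hx]
    have h0 : (x : C₀(I, ℝ)) i = 0 := by
      by_contra h
      exact hx ((hDmem i x).mpr h)
    rw [h0]
end

section
/- Let X be a real Banach space. Then X contains a linearly dense uniformly weakly null subset if and only if there exist a set I and an injective linear map T : X* → c₀(I) such that T is continuous from the weak* topology of X* to the topology of pointwise convergence on c₀(I), and for every ε > 0 there exists N ∈ ℕ such that for every x* in the closed unit ball B_{X*} of X*, the set {i ∈ I : |T(x*)(i)| > ε} has at most N elements (i.e., (B_{X*}, w*) is linearly uniformly Eberlein). -/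
/-!
A uniformly weakly null, linearly dense set `A` gives `T x* = (x*(a))_{a ∈ A}`, which is
injective because `A` is linearly dense and weak*-continuous because each coordinate is an
evaluation. Conversely, every coordinate `x* ↦ T(x*)(i)` is a weak*-continuous functional, hence
an evaluation at some `x_i ∈ X`; by Hahn–Banach, injectivity of `T` makes `{x_i}` linearly
dense, and the counting condition on `T` is the uniform weak nullity of `{x_i}`.
-/

open Set

section

variable {ι α : Type*}

theorem Set.encard_sep_range_le (x : ι → α) (p : α → Prop) :
    {y ∈ range x | p y}.encard ≤ {i | p (x i)}.encard := by
  have h := encard_image_le x (x ⁻¹' {y | p y})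
  rwa [image_preimage_eq_inter_range, inter_comm] at h

theorem Set.encard_setOf_subtype (A : Set α) (p : α → Prop) :
    {a : A | p a}.encard = {y ∈ A | p y}.encard := by
  rw [← encard_preimage_of_injective_subset_range (t := {y ∈ A | p y}) Subtype.val_injective
    fun y hy => ⟨⟨y, hy.1⟩, rfl⟩]
  congr 1
  ext
  simp

end

theorem Submodule.dense_span_of_forall_dual_eq_zero {E : Type*} [AddCommGroup E] [Module ℝ E]
    [TopologicalSpace E] [IsTopologicalAddGroup E] [ContinuousSMul ℝ E] [LocallyConvexSpace ℝ E]
    {A : Set E} (h : ∀ f : StrongDual ℝ E, (∀ a ∈ A, f a = 0) → f = 0) :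
    Dense (span ℝ A : Set E) := by
  set K := (span ℝ A).topologicalClosure
  refine dense_iff_topologicalClosure_eq_top.2 (eq_top_iff'.2 fun x => ?_)
  by_contra hx
  obtain ⟨f, u, hfK, hux⟩ :=
    geometric_hahn_banach_closed_point K.convex (span ℝ A).isClosed_topologicalClosure hx
  -- `f` is bounded above on the subspace `K`, so it vanishes there: rescaling `y` reaches `u`.
  have hf_K : ∀ y ∈ K, f y = 0 := by
    intro y hy
    by_contra hy0
    have := hfK ((u / f y) • y) (K.smul_mem _ hy)
    rw [map_smul, smul_eq_mul, div_mul_cancel₀ _ hy0] at this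
    exact lt_irrefl _ this
  have hf0 : f = 0 := h f fun a ha => hf_K a (le_topologicalClosure _ (subset_span ha))
  have hu : 0 < u := by simpa using hfK 0 K.zero_mem
  rw [hf0] at hux
  exact lt_irrefl (0 : ℝ) (hu.trans hux)

theorem WeakDual.exists_eq_apply_of_continuous {𝕜 E : Type*} [NontriviallyNormedField 𝕜]
    [AddCommGroup E] [Module 𝕜 E] [TopologicalSpace E] (φ : StrongDual 𝕜 E →ₗ[𝕜] 𝕜)
    (hφ : Continuous fun g : WeakDual 𝕜 E => φ (toStrongDual g)) :
    ∃ x : E, ∀ g : StrongDual 𝕜 E, φ g = g x := by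
  obtain ⟨x, hx⟩ := LinearMap.dualEmbedding_surjective (topDualPairing 𝕜 E)
    ⟨φ ∘ₗ toStrongDual.toLinearMap, hφ⟩
  exact ⟨x, fun g => (DFunLike.congr_fun hx g).symm⟩

section DualEval

variable {I E : Type*} [AddCommGroup E] [Module ℝ E] [TopologicalSpace E]

def dualEval (x : I → E) : StrongDual ℝ E →ₗ[ℝ] (I → ℝ) where
  toFun g i := g (x i)
  map_add' _ _ := rfl
  map_smul' _ _ := rfl

@[simp]
theorem dualEval_apply (x : I → E) (g : StrongDual ℝ E) (i : I) :
    dualEval x g i = g (x i) :=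
  rfl

theorem continuous_dualEval (x : I → E) :
    Continuous fun g : WeakDual ℝ E => dualEval x (WeakDual.toStrongDual g) :=
  continuous_pi fun i => WeakDual.eval_continuous (x i)

theorem dualEval_injective_iff [IsTopologicalAddGroup E] [ContinuousSMul ℝ E]
    [LocallyConvexSpace ℝ E] {x : I → E} :
    Function.Injective (dualEval x) ↔ Dense (Submodule.span ℝ (range x) : Set E) := by
  constructor
  · intro hinj
    refine Submodule.dense_span_of_forall_dual_eq_zero fun f hf => hinj ?_
    ext i
    simp [hf (x i) (mem_range_self i)]
  · intro hdense
    refine (injective_iff_map_eq_zero _).2 fun g hg => ?_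
    have hrange : EqOn g 0 (range x) := by
      rintro _ ⟨i, rfl⟩
      exact congr_fun hg i
    have hspan : EqOn g 0 (Submodule.span ℝ (range x)) :=
      LinearMap.eqOn_span' (f := (g : E →ₗ[ℝ] ℝ)) (g := 0) hrange
    exact DFunLike.coe_injective (Continuous.ext_on hdense g.continuous continuous_zero hspan)

end DualEval

section UniformlyWeaklyNull

variable {X : Type*} [NormedAddCommGroup X] [NormedSpace ℝ X]

def IsUniformlyWeaklyNull (A : Set X) : Prop :=
  ∀ ε : ℝ, 0 < ε → ∃ N : ℕ, ∀ f : StrongDual ℝ X, ‖f‖ ≤ 1 →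
    {x ∈ A | ε < |f x|}.encard ≤ N

theorem IsUniformlyWeaklyNull.finite_setOf_le_abs {A : Set X} (hA : IsUniformlyWeaklyNull A)
    (f : StrongDual ℝ X) {ε : ℝ} (hε : 0 < ε) : {x ∈ A | ε ≤ |f x|}.Finite := by
  set c := ‖f‖ + 1
  have hc : 0 < c := by positivity
  obtain ⟨N, hN⟩ := hA (ε / (2 * c)) (by positivity)
  have hcf : ‖c⁻¹ • f‖ ≤ 1 := by
    rw [norm_smul, norm_inv, Real.norm_of_nonneg hc.le, inv_mul_le_iff₀ hc]
    linarith
  refine (finite_of_encard_le_coe (hN _ hcf)).subset fun x ⟨hx, hfx⟩ => ⟨hx, ?_⟩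
  calc ε / (2 * c) < ε / c := by gcongr; linarith
    _ ≤ |f x| / c := by gcongr
    _ = |(c⁻¹ • f) x| := by simp [abs_mul, abs_of_pos hc, div_eq_inv_mul]

end UniformlyWeaklyNull

theorem statement17_general {X : Type u} [NormedAddCommGroup X] [NormedSpace ℝ X] :
    (∃ A : Set X, Dense (Submodule.span ℝ A : Set X) ∧
      ∀ ε : ℝ, 0 < ε → ∃ N : ℕ, ∀ f : X →L[ℝ] ℝ, ‖f‖ ≤ 1 →
        {x ∈ A | ε < |f x|}.encard ≤ (N : ℕ∞)) ↔
    (∃ (I : Type u) (T : StrongDual ℝ X →ₗ[ℝ] (I → ℝ)),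
      Function.Injective T ∧
      (∀ g : StrongDual ℝ X, ∀ ε : ℝ, 0 < ε → {i : I | ε ≤ |T g i|}.Finite) ∧
      Continuous (fun g : WeakDual ℝ X => T (WeakDual.toStrongDual g)) ∧
      (∀ ε : ℝ, 0 < ε → ∃ N : ℕ, ∀ g : StrongDual ℝ X, ‖g‖ ≤ 1 →
        {i : I | ε < |T g i|}.encard ≤ (N : ℕ∞))) := by
  constructor
  · rintro ⟨A, hdense, hA : IsUniformlyWeaklyNull A⟩
    refine ⟨A, dualEval (↑), dualEval_injective_iff.2 (by rwa [Subtype.range_coe]),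
      fun g ε hε => ?_, continuous_dualEval _, fun ε hε => ?_⟩
    · exact Set.encard_ne_top_iff.1 ((Set.encard_setOf_subtype A (fun y => ε ≤ |g y|)).trans_lt
        (hA.finite_setOf_le_abs g hε).encard_lt_top).ne
    · obtain ⟨N, hN⟩ := hA ε hε
      exact ⟨N, fun g hg =>
        (Set.encard_setOf_subtype A (fun y => ε < |g y|)).trans_le (hN g hg)⟩
  · rintro ⟨I, T, hinj, -, hcont, hT⟩
    choose x hx using fun i => WeakDual.exists_eq_apply_of_continuous
      (LinearMap.proj i ∘ₗ T) ((continuous_apply i).comp hcont)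
    obtain rfl : T = dualEval x := LinearMap.ext fun g => funext fun i => hx i g
    refine ⟨range x, dualEval_injective_iff.1 hinj, fun ε hε => ?_⟩
    obtain ⟨N, hN⟩ := hT ε hε
    exact ⟨N, fun g hg => (Set.encard_sep_range_le x _).trans (hN g hg)⟩

/-- A real Banach space `X` contains a linearly dense uniformly weakly null subset
if and only if `(B_{X*}, w*)` is linearly uniformly Eberlein: there are a set `I` and an
injective linear map `T : X* → c₀(I)`, continuous from the weak* topology to the topology of
pointwise convergence, such that for every `ε > 0` there is `N ∈ ℕ` with
`|{i : |T(x*)(i)| > ε}| ≤ N` for every `x*` in the closed unit ball of `X*`. -/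
theorem statement17 {X : Type u} [NormedAddCommGroup X] [NormedSpace ℝ X] [CompleteSpace X] :
    (∃ A : Set X, Dense (Submodule.span ℝ A : Set X) ∧
      ∀ ε : ℝ, 0 < ε → ∃ N : ℕ, ∀ f : X →L[ℝ] ℝ, ‖f‖ ≤ 1 →
        {x ∈ A | ε < |f x|}.encard ≤ (N : ℕ∞)) ↔
    (∃ (I : Type u) (T : StrongDual ℝ X →ₗ[ℝ] (I → ℝ)),
      Function.Injective T ∧
      (∀ g : StrongDual ℝ X, ∀ ε : ℝ, 0 < ε → {i : I | ε ≤ |T g i|}.Finite) ∧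
      Continuous (fun g : WeakDual ℝ X => T (WeakDual.toStrongDual g)) ∧
      (∀ ε : ℝ, 0 < ε → ∃ N : ℕ, ∀ g : StrongDual ℝ X, ‖g‖ ≤ 1 →
        {i : I | ε < |T g i|}.encard ≤ (N : ℕ∞))) :=
  statement17_general
end

section
/- Let X be a real Banach space, let B ⊆ B_{X*} be a norming set, i.e., ‖x‖ = sup_{b∈B} |b(x)| for every x ∈ X, let A ⊆ X be a bounded subset and let ε > 0. Suppose there exists N ∈ ℕ such that for every b ∈ B the set {x ∈ A : |b(x)| > ε} has at most N elements. Then for every ε' > ε there exists M ∈ ℕ such that every finite subset C ⊆ A with |C| ≥ M satisfies ‖ |C|⁻¹ · Σ_{x∈C} x ‖ < ε'. -/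
/-- Let `B` be a norming subset of the closed unit ball of the dual of a real
Banach space `X`, `A ⊆ X` bounded and `ε > 0`. If there is `N ∈ ℕ` such that
`{x ∈ A : |b(x)| > ε}` has at most `N` elements for every `b ∈ B`, then for every `ε' > ε` there
is `M ∈ ℕ` such that every finite `C ⊆ A` with `|C| ≥ M` satisfies
`‖|C|⁻¹ • ∑_{x ∈ C} x‖ < ε'`. -/
theorem statement18 {X : Type*} [NormedAddCommGroup X] [NormedSpace ℝ X] [CompleteSpace X]
    (B : Set (X →L[ℝ] ℝ)) (hB : ∀ b ∈ B, ‖b‖ ≤ 1)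
    (hnorming : ∀ x : X, ‖x‖ = ⨆ b : B, |(b : X →L[ℝ] ℝ) x|)
    (A : Set X) (hA : Bornology.IsBounded A) (ε : ℝ) (hε : 0 < ε)
    (N : ℕ) (h : ∀ b ∈ B, {x ∈ A | ε < |b x|}.encard ≤ (N : ℕ∞)) :
    ∀ ε' : ℝ, ε < ε' → ∃ M : ℕ, ∀ C : Finset X, ↑C ⊆ A → M ≤ C.card →
      ‖(C.card : ℝ)⁻¹ • ∑ x ∈ C, x‖ < ε' := by
  classical
  intro ε' hε'
  obtain ⟨r, hr⟩ := hA.subset_closedBall 0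
  set R : ℝ := max r 0 with hRdef
  have hR0 : 0 ≤ R := le_max_right _ _
  have hxR : ∀ x ∈ A, ‖x‖ ≤ R := by
    intro x hx
    have := hr hx
    rw [Metric.mem_closedBall, dist_zero_right] at this
    exact this.trans (le_max_left _ _)
  set M : ℕ := ⌈(N : ℝ) * R / (ε' - ε)⌉₊ + 1 with hM
  refine ⟨M, fun C hCA hMC => ?_⟩
  have hMpos : 0 < M := Nat.succ_pos _
  have hCpos : 0 < C.card := lt_of_lt_of_le hMpos hMC
  have hCposR : (0 : ℝ) < (C.card : ℝ) := by exact_mod_cast hCpos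
  have hNRlt : (N : ℝ) * R / (C.card : ℝ) < ε' - ε := by
    have hMR : ((N : ℝ) * R) / (ε' - ε) < (M : ℝ) := by
      calc ((N : ℝ) * R) / (ε' - ε) ≤ ⌈(N : ℝ) * R / (ε' - ε)⌉₊ := Nat.le_ceil _
        _ < M := by exact_mod_cast Nat.lt_succ_self _
    have hMC' : (M : ℝ) ≤ (C.card : ℝ) := by exact_mod_cast hMC
    have h1 : ((N : ℝ) * R) / (ε' - ε) < (C.card : ℝ) := lt_of_lt_of_le hMR hMC'
    rw [div_lt_iff₀ hCposR]
    calc (N : ℝ) * R < (C.card : ℝ) * (ε' - ε) := by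
          rw [div_lt_iff₀ (by linarith : (0:ℝ) < ε' - ε)] at h1
          linarith [h1]
      _ = (ε' - ε) * (C.card : ℝ) := mul_comm _ _
  -- bound each |b (avg)|
  have key : ∀ b ∈ B, |b ((C.card : ℝ)⁻¹ • ∑ x ∈ C, x)| ≤ ε + (N : ℝ) * R / (C.card : ℝ) := by
    intro b hb
    have hbad : (C.filter (fun x => ε < |b x|)).card ≤ N := by
      have hsub : ↑(C.filter (fun x => ε < |b x|)) ⊆ {x ∈ A | ε < |b x|} := by
        intro x hx
        simp only [Finset.coe_filter, Set.mem_setOf_eq] at hx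
        exact ⟨hCA hx.1, hx.2⟩
      have hfin := (Set.encard_le_coe_iff_finite_ncard_le.mp (h b hb))
      have h2 := (Set.ncard_le_ncard hsub hfin.1).trans hfin.2
      rwa [Set.ncard_coe_finset] at h2
    have hsum : |b (∑ x ∈ C, x)| ≤ ε * C.card + (N : ℝ) * R := by
      rw [map_sum]
      calc |∑ x ∈ C, b x| ≤ ∑ x ∈ C, |b x| := Finset.abs_sum_le_sum_abs _ _
        _ = ∑ x ∈ C.filter (fun x => ε < |b x|), |b x|
            + ∑ x ∈ C.filter (fun x => ¬ ε < |b x|), |b x| :=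
            (Finset.sum_filter_add_sum_filter_not C _ _).symm
        _ ≤ (N : ℝ) * R + ε * C.card := by
            gcongr ?_ + ?_
            · calc ∑ x ∈ C.filter (fun x => ε < |b x|), |b x|
                  ≤ ∑ _x ∈ C.filter (fun x => ε < |b x|), R := by
                    apply Finset.sum_le_sum
                    intro x hx
                    have hxA : x ∈ A := hCA (Finset.mem_filter.mp hx).1
                    calc |b x| ≤ ‖b‖ * ‖x‖ := b.le_opNorm x
                      _ ≤ 1 * R := mul_le_mul (hB b hb) (hxR x hxA) (norm_nonneg _)
                          zero_le_one
                      _ = R := one_mul _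
                _ = (C.filter (fun x => ε < |b x|)).card * R := by
                    rw [Finset.sum_const, nsmul_eq_mul]
                _ ≤ (N : ℝ) * R := by
                    apply mul_le_mul_of_nonneg_right _ hR0
                    exact_mod_cast hbad
            · calc ∑ x ∈ C.filter (fun x => ¬ ε < |b x|), |b x|
                  ≤ ∑ _x ∈ C.filter (fun x => ¬ ε < |b x|), ε := by
                    apply Finset.sum_le_sum
                    intro x hx
                    exact le_of_not_gt (Finset.mem_filter.mp hx).2
                _ = (C.filter (fun x => ¬ ε < |b x|)).card * ε := by
                    rw [Finset.sum_const, nsmul_eq_mul]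
                _ ≤ C.card * ε := by
                    apply mul_le_mul_of_nonneg_right _ hε.le
                    exact_mod_cast Finset.card_filter_le _ _
                _ = ε * C.card := mul_comm _ _
        _ = ε * C.card + (N : ℝ) * R := by ring
    have : |b ((C.card : ℝ)⁻¹ • ∑ x ∈ C, x)| = (C.card : ℝ)⁻¹ * |b (∑ x ∈ C, x)| := by
      rw [map_smul, smul_eq_mul, abs_mul, abs_of_nonneg (inv_nonneg.mpr hCposR.le)]
    rw [this]
    calc (C.card : ℝ)⁻¹ * |b (∑ x ∈ C, x)| ≤ (C.card : ℝ)⁻¹ * (ε * C.card + (N : ℝ) * R) := by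
          exact mul_le_mul_of_nonneg_left hsum (inv_nonneg.mpr hCposR.le)
      _ = ε + (N : ℝ) * R / (C.card : ℝ) := by
          field_simp
  have hnorm : ‖(C.card : ℝ)⁻¹ • ∑ x ∈ C, x‖ ≤ ε + (N : ℝ) * R / (C.card : ℝ) := by
    rw [hnorming]
    apply Real.iSup_le
    · rintro ⟨b, hb⟩
      exact key b hb
    · positivity
  linarith
end
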